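/- arXiv:1908.09030 — 5 statements merged into one kernel-verified Lean document; each statement's English description precedes it below -/
import Mathlib

section
/- Let H = (E, {X_1, …, X_n}) be a hypergraph and t_1, …, t_n integers with 0 ≤ t_i ≤ |X_i| such that properties (H2), (H3), and (T) hold, and let ρ be the polymatroid on E given by ρ(A) = Σ_{i=1}^n min(|A ∩ X_i|, t_i). Then for every positive integer k there is a bijection from the set of proper k-colorings of the line graph G_H onto Δ_ρ^k. Consequently, the least k for which ρ is k-decomposable equals the chromatic number χ(G_H), and for every positive integer k the cardinality of Δ_ρ^k equals the number of proper k-colorings of G_H. -/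
variable {α : Type*}

/-- `ρ` is an (integer) polymatroid on ground set `E`. -/
def IsPolymatroidOn [DecidableEq α] (E : Finset α) (ρ : Finset α → ℤ) : Prop :=
  ρ ∅ = 0 ∧
  (∀ A B : Finset α, A ⊆ B → B ⊆ E → ρ A ≤ ρ B) ∧
  (∀ A B : Finset α, A ⊆ E → B ⊆ E → ρ (A ∪ B) + ρ (A ∩ B) ≤ ρ A + ρ B)

/-- `r` is the rank function of a matroid on `E` (matroids are exactly the
`1`-polymatroids). -/
def IsMatroidRankOn [DecidableEq α] (E : Finset α) (r : Finset α → ℤ) : Prop :=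
  IsPolymatroidOn E r ∧ ∀ e ∈ E, r {e} ≤ 1

/-- `ρ` is a sum of `k` matroid rank functions on `E`. -/
def KDecomposable [DecidableEq α] (k : ℕ) (E : Finset α) (ρ : Finset α → ℤ) : Prop :=
  ∃ M : Fin k → Finset α → ℤ,
    (∀ i, IsMatroidRankOn E (M i)) ∧ ∀ X ⊆ E, ρ X = ∑ i, M i X

/-- `Δ_ρ^k`: the set of `k`-tuples of matroids on `E` whose rank functions sum to `ρ`.
(Matroids on `E` are recorded via their canonical extension `X ↦ r (X ∩ E)`, so that
each matroid on `E` corresponds to exactly one function.) -/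
def Delta [DecidableEq α] (k : ℕ) (E : Finset α) (ρ : Finset α → ℤ) :
    Set (Fin k → Finset α → ℤ) :=
  {M | (∀ i, IsMatroidRankOn E (M i)) ∧ (∀ i X, M i X = M i (X ∩ E)) ∧
    ∀ X ⊆ E, ρ X = ∑ i, M i X}

/-- The line graph of the (multi-)hypergraph with hyperedges `X 0, …, X (n-1)`. -/
def lineGraph [DecidableEq α] {n : ℕ} (X : Fin n → Finset α) : SimpleGraph (Fin n) where
  Adj i j := i ≠ j ∧ (X i ∩ X j).Nonempty
  symm := by
    refine ⟨?_⟩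
    rintro i j ⟨hij, hne⟩
    exact ⟨hij.symm, by rwa [Finset.inter_comm]⟩
  loopless := by refine ⟨?_⟩; rintro i ⟨h, -⟩; exact h rfl

/-- A proper `k`-coloring of a graph. -/
def ProperColoring {V : Type*} (G : SimpleGraph V) {k : ℕ} (c : V → Fin k) : Prop :=
  ∀ u v, G.Adj u v → c u ≠ c v

/-- `w e`: the number of hyperedges containing `e`. -/
def hypW [DecidableEq α] {n : ℕ} (X : Fin n → Finset α) (e : α) : ℕ :=
  (Finset.univ.filter fun i => e ∈ X i).card

/-- The polymatroid `ρ(A) = Σ_i min(|A ∩ X_i|, t_i)`. -/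
def hypRho [DecidableEq α] {n : ℕ} (X : Fin n → Finset α) (t : Fin n → ℤ) :
    Finset α → ℤ :=
  fun A => ∑ i, min (((A ∩ X i).card : ℤ)) (t i)

/-!
A proper colouring `c` yields the decomposition `j ↦ colorRank X t c j`, the direct sum of the
uniform matroids `U_{t i}(X i)` over the colour class `j`. Different colourings give different
decompositions: if `c i₀ ≠ c' i₀`, the points of `X i₀` are non-loops of colour `c i₀` and hence
covered by hyperedges of `c'`-colour `c i₀`, which forces `|X i₀| ≤ t i₀`, so by (T) `X i₀` is a
singleton `{e}`; the hyperedge covering `e` is then a second singleton `{e}`.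

Conversely, let `ρ = Σ_j r_j`. The defects `Σ_{e ∈ A} r_j {e} - r_j A` sum over `j` to the total
excess `Σ_l max 0 (|A ∩ X l| - t l)`. If `t i < |X i|`, every `(t i + 1)`-subset of `X i` has
total excess `1`, and exchanging one point at a time shows that they are all dependent in the same
colour, which becomes the colour of `X i`; in it `r_j` restricts to the uniform matroid on `X i`.
Intersecting hyperedges get different colours. For two lines (threshold `1`) a common colour
would, by (H3), make a point parallel to three points of a line (a pencil), and the triples and
the quadruple of the pencil carry too little excess. Otherwise the defect of
`(X i ∪ X i') \ {e}` in the common colour, plus one unit in another colour for each line crossing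
both hyperedges, exceeds the excess. Singletons take a colour not used at their point, and then
`r_j ≤ colorRank X t c j`, with equality since both sides sum to `ρ`.
-/

open Finset

section RankFunction

variable [DecidableEq α]

/-- Zero exactly on the independent sets of the matroid with rank function `r`. -/
def rankDefect (r : Finset α → ℤ) (A : Finset α) : ℤ := ∑ e ∈ A, r {e} - r A

def IsParallel (r : Finset α → ℤ) (x y : α) : Prop :=
  x ≠ y ∧ r {x} = 1 ∧ r {y} = 1 ∧ r {x, y} = 1

theorem IsParallel.symm {r : Finset α → ℤ} {x y : α} (h : IsParallel r x y) :
    IsParallel r y x :=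
  ⟨h.1.symm, h.2.2.1, h.2.1, by rw [pair_comm]; exact h.2.2.2⟩

theorem rankDefect_pair (r : Finset α → ℤ) {x y : α} (hxy : x ≠ y) :
    rankDefect r {x, y} = r {x} + r {y} - r {x, y} := by
  rw [rankDefect, sum_pair hxy]

theorem IsParallel.rankDefect_eq_one {r : Finset α → ℤ} {x y : α} (h : IsParallel r x y) :
    rankDefect r {x, y} = 1 := by
  rw [rankDefect_pair r h.1, h.2.1, h.2.2.1, h.2.2.2]; norm_num

theorem rankDefect_erase (r : Finset α → ℤ) {A : Finset α} {e : α} (he : e ∈ A)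
    (h : r (A.erase e) = r A) : rankDefect r A = rankDefect r (A.erase e) + r {e} := by
  rw [rankDefect, rankDefect, ← sum_erase_add _ _ he, h]; ring

namespace IsMatroidRankOn

variable {E : Finset α} {r : Finset α → ℤ} {A B : Finset α} {e x y z : α}

theorem rank_empty (hr : IsMatroidRankOn E r) : r ∅ = 0 := hr.1.1

theorem mono (hr : IsMatroidRankOn E r) (hAB : A ⊆ B) (hB : B ⊆ E) : r A ≤ r B :=
  hr.1.2.1 A B hAB hB

theorem submod (hr : IsMatroidRankOn E r) (hA : A ⊆ E) (hB : B ⊆ E) :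
    r (A ∪ B) + r (A ∩ B) ≤ r A + r B :=
  hr.1.2.2 A B hA hB

theorem nonneg (hr : IsMatroidRankOn E r) (hA : A ⊆ E) : 0 ≤ r A :=
  hr.rank_empty ▸ hr.mono (empty_subset A) hA

theorem singleton_eq_zero_or_one (hr : IsMatroidRankOn E r) (he : e ∈ E) :
    r {e} = 0 ∨ r {e} = 1 := by
  have := hr.2 e he
  have := hr.nonneg (singleton_subset_iff.2 he)
  omega

theorem rank_le_sum_singleton (hr : IsMatroidRankOn E r) (hA : A ⊆ E) :
    r A ≤ ∑ e ∈ A, r {e} := by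
  induction A using Finset.induction_on with
  | empty => simp [hr.rank_empty]
  | @insert e A he ih =>
    have hA' := (subset_insert e A).trans hA
    have h := hr.submod (singleton_subset_iff.2 (hA (mem_insert_self e A))) hA'
    rw [← insert_eq, singleton_inter_of_notMem he, hr.rank_empty] at h
    rw [sum_insert he]
    linarith [ih hA']

theorem rankDefect_nonneg (hr : IsMatroidRankOn E r) (hA : A ⊆ E) : 0 ≤ rankDefect r A :=
  sub_nonneg.2 (hr.rank_le_sum_singleton hA)

theorem rankDefect_add_le (hr : IsMatroidRankOn E r) (hA : A ⊆ E) (hB : B ⊆ E) :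
    rankDefect r A + rankDefect r B ≤ rankDefect r (A ∪ B) + rankDefect r (A ∩ B) := by
  have := hr.submod hA hB
  have := sum_union_inter (s₁ := A) (s₂ := B) (f := fun e => r {e})
  simp only [rankDefect]
  linarith

theorem rankDefect_le_insert (hr : IsMatroidRankOn E r) (hA : A ⊆ E) (he : e ∈ E) :
    rankDefect r A ≤ rankDefect r (insert e A) := by
  by_cases heA : e ∈ A
  · rw [insert_eq_of_mem heA]
  · have h := hr.rankDefect_add_le hA (singleton_subset_iff.2 he)
    rw [inter_singleton_of_notMem heA, union_singleton] at h
    simp only [rankDefect, sum_singleton, sum_empty, hr.rank_empty] at h ⊢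
    linarith

theorem rankDefect_mono (hr : IsMatroidRankOn E r) (hAB : A ⊆ B) (hB : B ⊆ E) :
    rankDefect r A ≤ rankDefect r B := by
  have key : ∀ s ⊆ E, rankDefect r A ≤ rankDefect r (A ∪ s) := by
    intro s
    induction s using Finset.induction_on with
    | empty => simp
    | @insert e s _ ih =>
      intro hs
      rw [union_insert]
      exact (ih ((subset_insert e s).trans hs)).trans (hr.rankDefect_le_insert
        (union_subset (hAB.trans hB) ((subset_insert e s).trans hs)) (hs (mem_insert_self e s)))
  simpa [union_eq_right.2 hAB] using key B hB

theorem rankDefect_insert_le (hr : IsMatroidRankOn E r) (hA : A ⊆ E) (he : e ∈ E) :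
    rankDefect r (insert e A) ≤ rankDefect r A + 1 := by
  by_cases heA : e ∈ A
  · rw [insert_eq_of_mem heA]; omega
  · have := hr.2 e he
    have := hr.mono (subset_insert e A) (insert_subset he hA)
    rw [rankDefect, rankDefect, sum_insert heA]
    linarith

theorem rank_erase_eq (hr : IsMatroidRankOn E r) (hA : A ⊆ E) (hBA : B ⊆ A) (he : e ∈ B)
    (hB : r (B.erase e) = r B) : r (A.erase e) = r A := by
  have h := hr.submod (A := A.erase e) (B := B) ((erase_subset e A).trans hA) (hBA.trans hA)
  have hU : A.erase e ∪ B = A := by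
    ext x; have := @hBA x; grind
  have hI : A.erase e ∩ B = B.erase e := by
    ext x; have := @hBA x; grind
  rw [hU, hI, hB] at h
  linarith [hr.mono (erase_subset e A) hA]

theorem rank_erase_of_loop (hr : IsMatroidRankOn E r) (hA : A ⊆ E) (he : e ∈ A)
    (h0 : r {e} = 0) : r (A.erase e) = r A :=
  hr.rank_erase_eq hA (singleton_subset_iff.2 he) (mem_singleton_self e)
    (by rw [erase_singleton, hr.rank_empty, h0])

theorem rank_erase_of_isParallel (hr : IsMatroidRankOn E r) (hA : A ⊆ E)
    (h : IsParallel r x y) (hx : x ∈ A) (hy : y ∈ A) : r (A.erase y) = r A := by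
  refine hr.rank_erase_eq hA (insert_subset hx (singleton_subset_iff.2 hy))
    (mem_insert_of_mem (mem_singleton_self y)) ?_
  rw [erase_insert_of_ne h.1, erase_singleton, insert_empty, h.2.1, h.2.2.2]

theorem isParallel_iff (hr : IsMatroidRankOn E r) (hxy : x ≠ y) (hx : x ∈ E) (hy : y ∈ E) :
    IsParallel r x y ↔ 1 ≤ rankDefect r {x, y} := by
  have hxyE : {x, y} ⊆ E := insert_subset hx (singleton_subset_iff.2 hy)
  have := hr.singleton_eq_zero_or_one hx
  have := hr.singleton_eq_zero_or_one hy
  have := hr.mono (singleton_subset_iff.2 (mem_insert_self x {y})) hxyE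
  have := hr.mono (singleton_subset_iff.2 (mem_insert_of_mem (mem_singleton_self y))) hxyE
  rw [rankDefect_pair r hxy]
  exact ⟨fun ⟨_, h1, h2, h3⟩ => by omega, fun h => ⟨hxy, by omega, by omega, by omega⟩⟩

theorem isParallel_trans (hr : IsMatroidRankOn E r) (hx : x ∈ E) (hy : y ∈ E) (hz : z ∈ E)
    (hxy : IsParallel r x y) (hxz : IsParallel r x z) (hyz : y ≠ z) : IsParallel r y z := by
  have hxyz : {x, y, z} ⊆ E := by simp [insert_subset_iff, *]
  have h := hr.submod (A := {x, y}) (B := {x, z}) (by simp [insert_subset_iff, *])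
    (by simp [insert_subset_iff, *])
  have hU : ({x, y} ∪ {x, z} : Finset α) = {x, y, z} := by ext; simp
  have hI : ({x, y} ∩ {x, z} : Finset α) = {x} := by
    ext a; simp only [mem_inter, mem_insert, mem_singleton]; grind
  rw [hU, hI] at h
  have := hr.mono (A := {y, z}) (by intro a; simp only [mem_insert, mem_singleton]; tauto) hxyz
  have := hr.mono (A := {y}) (by simp) (show {y, z} ⊆ E by simp [insert_subset_iff, *])
  exact ⟨hyz, hxy.2.2.1, hxz.2.2.1, by linarith [hxy.2.1, hxy.2.2.2, hxz.2.2.2, hxy.2.2.1]⟩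

theorem rank_insert_of_isParallel (hr : IsMatroidRankOn E r) {s : Finset α}
    (hs : insert x s ⊆ E) (h : ∀ y ∈ s, IsParallel r x y) : r (insert x s) = r {x} := by
  induction s using Finset.induction_on with
  | empty => rfl
  | @insert y s hys ih =>
    have hxy := h y (mem_insert_self y s)
    rw [← ih ((insert_subset_insert x (subset_insert y s)).trans hs)
      (fun z hz => h z (mem_insert_of_mem hz)),
      ← hr.rank_erase_of_isParallel hs hxy (mem_insert_self x _)
        (mem_insert_of_mem (mem_insert_self y s)),
      erase_insert_of_ne hxy.1, erase_insert hys]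

theorem rankDefect_insert_of_isParallel (hr : IsMatroidRankOn E r) {s : Finset α}
    (hxs : x ∉ s) (hs : insert x s ⊆ E) (h : ∀ y ∈ s, IsParallel r x y) :
    rankDefect r (insert x s) = s.card := by
  rcases s.eq_empty_or_nonempty with rfl | ⟨y, hy⟩
  · simp [rankDefect]
  have hx : r {x} = 1 := (h y hy).2.1
  rw [rankDefect, hr.rank_insert_of_isParallel hs h, sum_insert hxs,
    sum_congr rfl fun z hz => (h z hz).2.2.1, hx]
  simp

theorem rankDefect_erase_of_isParallel (hr : IsMatroidRankOn E r) (hA : A ⊆ E)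
    (h : IsParallel r x y) (hx : x ∈ A) (hy : y ∈ A) :
    rankDefect r A = rankDefect r (A.erase y) + 1 := by
  rw [rankDefect_erase r hy (hr.rank_erase_of_isParallel hA h hx hy), h.2.2.1]

/-- Deleting `q l` keeps the rank, as `p l` still spans it, and so lowers the defect by one. -/
theorem card_le_rankDefect {ι : Type*} (hr : IsMatroidRankOn E r) {F : Finset ι}
    {p q : ι → α} (hpar : ∀ l ∈ F, IsParallel r (p l) (q l))
    (hp : ∀ l ∈ F, p l ∈ A) (hq : ∀ l ∈ F, q l ∈ A) (hqinj : Set.InjOn q F)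
    (hpq : ∀ l ∈ F, ∀ l' ∈ F, p l ≠ q l') (hA : A ⊆ E) : (F.card : ℤ) ≤ rankDefect r A := by
  classical
  induction F using Finset.induction_on generalizing A with
  | empty => simpa using hr.rankDefect_nonneg hA
  | @insert l F hl ih =>
    have hlF := mem_insert_self l F
    have hmem : ∀ l' ∈ F, l' ≠ l := fun l' hl' h => hl (h ▸ hl')
    have := ih (A := A.erase (q l)) (fun l' hl' => hpar l' (mem_insert_of_mem hl'))
      (fun l' hl' => mem_erase.2
        ⟨hpq l' (mem_insert_of_mem hl') l hlF, hp l' (mem_insert_of_mem hl')⟩)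
      (fun l' hl' => mem_erase.2 ⟨fun h => hmem l' hl'
        (hqinj (mem_insert_of_mem hl') hlF h), hq l' (mem_insert_of_mem hl')⟩)
      (hqinj.mono (by simp)) (fun l₁ h₁ l₂ h₂ => hpq l₁ (mem_insert_of_mem h₁) l₂
        (mem_insert_of_mem h₂)) ((erase_subset _ _).trans hA)
    rw [card_insert_of_notMem hl, hr.rankDefect_erase_of_isParallel hA (hpar l hlF)
      (hp l hlF) (hq l hlF)]
    push_cast
    linarith

theorem comp_inter (hr : IsMatroidRankOn E r) : IsMatroidRankOn E fun A => r (A ∩ E) := by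
  refine ⟨⟨by simpa using hr.rank_empty, fun A B hAB hB => ?_, fun A B hA hB => ?_⟩,
    fun e he => ?_⟩
  · simpa [inter_eq_left.2 hB, inter_eq_left.2 (hAB.trans hB)] using hr.mono hAB hB
  · simpa [inter_eq_left.2 hA, inter_eq_left.2 hB, inter_eq_left.2 (union_subset hA hB),
      inter_eq_left.2 (inter_subset_left.trans hA)] using hr.submod hA hB
  · simpa [inter_eq_left.2 (singleton_subset_iff.2 he)] using hr.2 e he

end IsMatroidRankOn
end RankFunction

section Hypergraph

variable [DecidableEq α] {n : ℕ} {X : Fin n → Finset α} {t : Fin n → ℤ} {A : Finset α}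
  {i l : Fin n} {x y z : α}

theorem one_le_of_threshold
    (hT : t i = 1 ∨ ((∃ e ∈ X i, (hypW X e : ℤ) ≤ t i) ∧ t i < ((X i).card : ℤ))) :
    1 ≤ t i := by
  rcases hT with h | ⟨⟨e, he, hw⟩, -⟩
  · exact h.ge
  · have : 0 < hypW X e := card_pos.2 ⟨i, by simpa using he⟩
    omega

variable (X t) in
/-- `max 0 (|A ∩ X l| - t l)`; summed over `l`, it is the total defect of `A` in any
decomposition of `hypRho X t` (`Decomposition.sum_rankDefect`). -/
def hypExcess (l : Fin n) (A : Finset α) : ℤ :=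
  (A ∩ X l).card - min ((A ∩ X l).card : ℤ) (t l)

theorem hypExcess_nonneg : 0 ≤ hypExcess X t l A := by
  unfold hypExcess; omega

theorem hypExcess_eq_zero (h : ((A ∩ X l).card : ℤ) ≤ t l) : hypExcess X t l A = 0 := by
  unfold hypExcess; omega

theorem hypExcess_eq_sub (h : t l ≤ (A ∩ X l).card) :
    hypExcess X t l A = (A ∩ X l).card - t l := by
  unfold hypExcess; omega

theorem one_le_hypExcess (hl : t l = 1) (hxy : x ≠ y) (hx : x ∈ A ∩ X l)
    (hy : y ∈ A ∩ X l) : 1 ≤ hypExcess X t l A := by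
  have := card_le_card (insert_subset hx (singleton_subset_iff.2 hy))
  rw [card_pair hxy] at this
  unfold hypExcess; omega

theorem hypRho_singleton (ht : ∀ l, 1 ≤ t l) (e : α) : hypRho X t {e} = hypW X e := by
  rw [hypRho, hypW, card_filter]
  push_cast
  refine sum_congr rfl fun l _ => ?_
  have := ht l
  by_cases h : e ∈ X l
  · rw [singleton_inter_of_mem h, if_pos h, card_singleton]; omega
  · rw [singleton_inter_of_notMem h, if_neg h, card_empty]; omega

theorem sum_hypW (A : Finset α) :
    ∑ e ∈ A, (hypW X e : ℤ) = ∑ l, ((A ∩ X l).card : ℤ) := by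
  simp only [hypW, card_filter, Nat.cast_sum, Nat.cast_ite, Nat.cast_one, Nat.cast_zero]
  rw [sum_comm]
  exact sum_congr rfl fun l _ => by rw [sum_boole, filter_mem_eq_inter]

theorem sum_hypRho_singleton_sub (ht : ∀ l, 1 ≤ t l) (A : Finset α) :
    ∑ e ∈ A, hypRho X t {e} - hypRho X t A = ∑ l, hypExcess X t l A := by
  rw [sum_congr rfl fun e _ => hypRho_singleton ht e, sum_hypW, hypRho]
  simp only [hypExcess, sum_sub_distrib]

theorem eq_of_two_mem (hH2 : ∀ i j, i ≠ j → (X i ∩ X j).card ≤ 1) (hxy : x ≠ y)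
    {l' : Fin n} (hx : x ∈ X l) (hy : y ∈ X l) (hx' : x ∈ X l') (hy' : y ∈ X l') : l = l' := by
  by_contra hne
  have := card_le_card (s := {x, y}) (t := X l ∩ X l') (by simp [insert_subset_iff, *])
  rw [card_pair hxy] at this
  have := hH2 l l' hne
  omega

theorem sum_hypExcess_of_subset (hH2 : ∀ i j, i ≠ j → (X i ∩ X j).card ≤ 1)
    (ht : ∀ l, 1 ≤ t l) (hA : A ⊆ X i) :
    ∑ l, hypExcess X t l A = max 0 ((A.card : ℤ) - t i) := by
  rw [← sum_subset (subset_univ {i}) fun l _ hl => hypExcess_eq_zero ?_, sum_singleton,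
    hypExcess, inter_eq_left.2 hA]
  · omega
  have := card_le_card (inter_subset_inter_right (u := X l) hA)
  have := hH2 i l (Ne.symm (by simpa using hl))
  have := ht l
  omega

theorem hypExcess_insert_le (ht : ∀ l, 1 ≤ t l) (hz : z ∉ A) :
    hypExcess X t l (insert z A) ≤
      hypExcess X t l A + if z ∈ X l then ((A ∩ X l).card : ℤ) else 0 := by
  by_cases hzl : z ∈ X l
  · have := ht l
    rw [if_pos hzl, hypExcess, hypExcess, insert_inter_of_mem hzl,
      card_insert_of_notMem fun h => hz (mem_inter.1 h).1]
    push_cast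
    omega
  · rw [if_neg hzl, hypExcess, hypExcess, insert_inter_of_notMem hzl, add_zero]

/-- At most one hyperedge passes through `z` and a given point of `A`. -/
theorem sum_hypExcess_insert_le (hH2 : ∀ i j, i ≠ j → (X i ∩ X j).card ≤ 1)
    (ht : ∀ l, 1 ≤ t l) (hz : z ∉ A) :
    ∑ l, hypExcess X t l (insert z A) ≤ ∑ l, hypExcess X t l A + A.card := by
  refine (sum_le_sum fun l _ => hypExcess_insert_le ht hz).trans ?_
  rw [sum_add_distrib, ← sum_filter]
  gcongr
  have hdisj :
      ((univ.filter (z ∈ X ·) : Finset (Fin n)) : Set (Fin n)).PairwiseDisjoint (A ∩ X ·) := by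
    intro l hl l' hl' hne
    refine disjoint_left.2 fun a ha ha' => ?_
    have hza : z ≠ a := fun h => hz (h ▸ (mem_inter.1 ha).1)
    exact hne (eq_of_two_mem hH2 hza (by simpa using hl) (mem_inter.1 ha).2
      (by simpa using hl') (mem_inter.1 ha').2)
  rw [← Nat.cast_sum, ← card_biUnion hdisj]
  exact_mod_cast card_le_card (biUnion_subset.2 fun l _ => inter_subset_left)

theorem sum_hypExcess_singleton (ht : ∀ l, 1 ≤ t l) (y : α) :
    ∑ l, hypExcess X t l {y} = 0 :=
  sum_eq_zero fun l _ => hypExcess_eq_zero (by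
    have := card_le_card (inter_subset_left (s₁ := {y}) (s₂ := X l))
    rw [card_singleton] at this
    have := ht l
    omega)

end Hypergraph

section ColorRank

variable [DecidableEq α] {n k : ℕ} {E : Finset α} {X : Fin n → Finset α} {t : Fin n → ℤ}
  {c c' : Fin n → Fin k} {j : Fin k} {A : Finset α} {e : α}

/-- The rank function of the colour class `j`: the direct sum of the uniform matroids of rank
`t i` on the hyperedges `X i` of colour `j`. -/
def colorRank (X : Fin n → Finset α) (t : Fin n → ℤ) (c : Fin n → Fin k) (j : Fin k)
    (A : Finset α) : ℤ :=
  ∑ i ∈ univ.filter (c · = j), min ((A ∩ X i).card : ℤ) (t i)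

theorem sum_colorRank (X : Fin n → Finset α) (t : Fin n → ℤ) (c : Fin n → Fin k)
    (A : Finset α) : ∑ j, colorRank X t c j A = hypRho X t A :=
  sum_fiberwise _ _ _

theorem colorRank_mono {X : Fin n → Finset α} {t : Fin n → ℤ} (c : Fin n → Fin k) (j : Fin k)
    {A B : Finset α} (hAB : A ⊆ B) : colorRank X t c j A ≤ colorRank X t c j B :=
  sum_le_sum fun i _ => by
    have := card_le_card (inter_subset_inter_right (u := X i) hAB)
    omega

theorem isPolymatroidOn_sum_min (ht : ∀ i, 0 ≤ t i) (s : Finset (Fin n)) :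
    IsPolymatroidOn E fun A => ∑ i ∈ s, min ((A ∩ X i).card : ℤ) (t i) := by
  refine ⟨sum_eq_zero fun i _ => by simp [ht i], fun A B hAB _ => sum_le_sum fun i _ => ?_,
    fun A B _ _ => ?_⟩
  · have := card_le_card (inter_subset_inter_right (u := X i) hAB)
    omega
  · rw [← sum_add_distrib, ← sum_add_distrib]
    refine sum_le_sum fun i _ => ?_
    have h := card_union_add_card_inter (A ∩ X i) (B ∩ X i)
    rw [← union_inter_distrib_right, ← inter_inter_distrib_right] at h
    have := card_le_card (inter_subset_inter_right (u := X i) (subset_union_left : A ⊆ A ∪ B))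
    have := card_le_card (inter_subset_inter_right (u := X i) (subset_union_right : B ⊆ A ∪ B))
    omega

theorem ProperColoring.pairwiseDisjoint (hc : ProperColoring (lineGraph X) c) (j : Fin k) :
    ((univ.filter (c · = j) : Finset (Fin n)) : Set (Fin n)).PairwiseDisjoint X := by
  intro i hi i' hi' hne
  rw [Function.onFun, disjoint_iff_inter_eq_empty, ← not_nonempty_iff_eq_empty]
  simp only [coe_filter, mem_univ, true_and, Set.mem_ofPred_eq] at hi hi'
  exact fun h => hc i i' ⟨hne, h⟩ (hi.trans hi'.symm)

theorem colorRank_singleton_le_one (hc : ProperColoring (lineGraph X) c) (j : Fin k) (e : α) :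
    colorRank X t c j {e} ≤ 1 := calc
  colorRank X t c j {e} ≤ ∑ i ∈ univ.filter (c · = j), (({e} ∩ X i).card : ℤ) :=
    sum_le_sum fun i _ => min_le_left _ _
  _ = (((univ.filter (c · = j)).biUnion ({e} ∩ X ·)).card : ℤ) := by
    rw [card_biUnion ((hc.pairwiseDisjoint j).mono fun i => inter_subset_right), Nat.cast_sum]
  _ ≤ 1 := mod_cast (card_le_card (biUnion_subset.2 fun _ _ => inter_subset_left)).trans
    (card_singleton e).le

theorem colorRank_mem_Delta (hX : ∀ i, X i ⊆ E) (ht : ∀ i, 0 ≤ t i)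
    (hc : ProperColoring (lineGraph X) c) : colorRank X t c ∈ Delta k E (hypRho X t) := by
  refine ⟨fun j => ⟨isPolymatroidOn_sum_min ht _, fun e _ => colorRank_singleton_le_one hc j e⟩,
    fun j A => sum_congr rfl fun i _ => ?_, fun A _ => (sum_colorRank X t c A).symm⟩
  rw [inter_assoc, inter_eq_right.2 (hX i)]

theorem one_le_colorRank (ht : ∀ i, 1 ≤ t i) {i : Fin n} (he : e ∈ X i) :
    1 ≤ colorRank X t c (c i) {e} := by
  refine le_trans ?_ (single_le_sum (fun i _ => ?_) (mem_filter.2 ⟨mem_univ i, rfl⟩))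
  · rw [singleton_inter_of_mem he, card_singleton]; have := ht i; omega
  · have := ht i; omega

theorem exists_of_one_le_colorRank (ht : ∀ i, 0 ≤ t i) (h : 1 ≤ colorRank X t c j {e}) :
    ∃ i, c i = j ∧ e ∈ X i := by
  by_contra! hcon
  refine absurd h (not_le.2 (lt_of_eq_of_lt (sum_eq_zero fun i hi => ?_) one_pos))
  rw [singleton_inter_of_notMem (hcon i (mem_filter.1 hi).2), card_empty]
  exact min_eq_left (ht i)

theorem card_le_colorRank (hcover : ∀ e ∈ A, ∃ i, c i = j ∧ e ∈ X i)
    (hsmall : ∀ i, c i = j → ((A ∩ X i).card : ℤ) ≤ t i) :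
    (A.card : ℤ) ≤ colorRank X t c j A := calc
  (A.card : ℤ) ≤ (((univ.filter (c · = j)).biUnion (A ∩ X ·)).card : ℤ) := by
    refine Nat.cast_le.2 (card_le_card fun e he => ?_)
    obtain ⟨i, hij, hei⟩ := hcover e he
    exact mem_biUnion.2 ⟨i, by simpa using hij, mem_inter.2 ⟨he, hei⟩⟩
  _ ≤ ∑ i ∈ univ.filter (c · = j), ((A ∩ X i).card : ℤ) := mod_cast card_biUnion_le
  _ = colorRank X t c j A :=
    sum_congr rfl fun i hi => (min_eq_left (hsmall i (mem_filter.1 hi).2)).symm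

theorem colorRank_self (ht : ∀ i, 0 ≤ t i) (ht' : ∀ i, t i ≤ ((X i).card : ℤ))
    (hc : ProperColoring (lineGraph X) c) (i : Fin n) : colorRank X t c (c i) (X i) = t i := by
  rw [colorRank, sum_eq_single_of_mem i (by simp) fun i' hi' hne => ?_, inter_self]
  · exact min_eq_right (ht' i)
  · rw [disjoint_iff_inter_eq_empty.1 (hc.pairwiseDisjoint (c i) (by simp) (by simpa using hi')
      hne.symm), card_empty]
    exact min_eq_left (ht i')

theorem exists_eq_singleton_of_colorRank_eq (ht : ∀ i, 1 ≤ t i)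
    (ht' : ∀ i, t i ≤ ((X i).card : ℤ)) (hT : ∀ i, t i = 1 ∨ t i < ((X i).card : ℤ))
    (hH2 : ∀ i j, i ≠ j → (X i ∩ X j).card ≤ 1) (hc : ProperColoring (lineGraph X) c)
    (h : colorRank X t c = colorRank X t c') {i₀ : Fin n} (hne : c i₀ ≠ c' i₀) :
    ∃ e, X i₀ = {e} ∧ ∃ i₁ ≠ i₀, e ∈ X i₁ ∧ c' i₁ = c i₀ := by
  have ht0 (i : Fin n) : 0 ≤ t i := by have := ht i; omega
  have hcover (e) (he : e ∈ X i₀) : ∃ i, c' i = c i₀ ∧ e ∈ X i :=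
    exists_of_one_le_colorRank ht0 (h ▸ one_le_colorRank ht he)
  have hcard := card_le_colorRank (t := t) hcover fun i hi => by
    have := hH2 i₀ i fun h => hne (h ▸ hi.symm)
    have := ht i
    omega
  rw [← h, colorRank_self ht0 ht' hc] at hcard
  have hX : (X i₀).card = 1 := by have := ht' i₀; rcases hT i₀ with h1 | h1 <;> omega
  obtain ⟨e, he⟩ := card_eq_one.1 hX
  obtain ⟨i₁, hi₁, hei₁⟩ := hcover e (he ▸ mem_singleton_self e)
  exact ⟨e, he, i₁, fun h => hne (h ▸ hi₁.symm), hei₁, hi₁⟩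

theorem eq_of_colorRank_eq (hX : Function.Injective X) (ht : ∀ i, 1 ≤ t i)
    (ht' : ∀ i, t i ≤ ((X i).card : ℤ)) (hT : ∀ i, t i = 1 ∨ t i < ((X i).card : ℤ))
    (hH2 : ∀ i j, i ≠ j → (X i ∩ X j).card ≤ 1) (hc : ProperColoring (lineGraph X) c)
    (hc' : ProperColoring (lineGraph X) c') (h : colorRank X t c = colorRank X t c') :
    c = c' := by
  funext i₀
  by_contra hne
  obtain ⟨e, he, i₁, hi₁, hei₁, hc'i₁⟩ :=
    exists_eq_singleton_of_colorRank_eq ht ht' hT hH2 hc h hne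
  have hne₁ : c' i₁ ≠ c i₁ := hc'i₁ ▸ hc i₀ i₁ ⟨hi₁.symm, ⟨e, by simp [he, hei₁]⟩⟩
  obtain ⟨e', he', -⟩ := exists_eq_singleton_of_colorRank_eq ht ht' hT hH2 hc' h.symm hne₁
  rw [he', mem_singleton] at hei₁
  exact hi₁ (hX (he'.trans (hei₁ ▸ he.symm)))

end ColorRank

/-- A hypergraph satisfying (H2) `inter_card_le_one`, (H3) `not_triangle` and (T) `threshold`,
with matroid rank functions `M j` summing to its polymatroid. -/
structure Decomposition (α : Type*) [DecidableEq α] where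
  n : ℕ
  E : Finset α
  X : Fin n → Finset α
  t : Fin n → ℤ
  k : ℕ
  M : Fin k → Finset α → ℤ
  X_subset : ∀ i, X i ⊆ E
  X_injective : Function.Injective X
  t_le_card : ∀ i, t i ≤ ((X i).card : ℤ)
  inter_card_le_one : ∀ i j, i ≠ j → (X i ∩ X j).card ≤ 1
  not_triangle : ¬ ∃ (a b c : α) (i j l : Fin n),
    a ≠ b ∧ a ≠ c ∧ b ≠ c ∧ X i = {a, b} ∧ X j = {a, c} ∧ X l = {b, c}
  threshold : ∀ i, t i = 1 ∨ ((∃ e ∈ X i, (hypW X e : ℤ) ≤ t i) ∧ t i < ((X i).card : ℤ))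
  isMatroidRankOn : ∀ j, IsMatroidRankOn E (M j)
  hypRho_eq_sum : ∀ A ⊆ E, hypRho X t A = ∑ j, M j A

namespace Decomposition

variable [DecidableEq α] (C : Decomposition α) {A S V : Finset α} {i i' l : Fin C.n}
  {j j' τ : Fin C.k} {a b e u v w x y z : α}

theorem one_le_t (i : Fin C.n) : 1 ≤ C.t i := one_le_of_threshold (C.threshold i)

theorem sum_rankDefect (hA : A ⊆ C.E) :
    ∑ j, rankDefect (C.M j) A = ∑ l, hypExcess C.X C.t l A := by
  rw [← sum_hypRho_singleton_sub C.one_le_t, C.hypRho_eq_sum A hA,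
    sum_congr rfl fun e he => C.hypRho_eq_sum {e} (singleton_subset_iff.2 (hA he))]
  simp only [rankDefect, sum_sub_distrib]
  rw [sum_comm]

theorem sum_rankDefect_le (J : Finset (Fin C.k)) (hA : A ⊆ C.E) :
    ∑ j ∈ J, rankDefect (C.M j) A ≤ ∑ l, hypExcess C.X C.t l A :=
  C.sum_rankDefect hA ▸ sum_le_sum_of_subset_of_nonneg (subset_univ J)
    fun j _ _ => (C.isMatroidRankOn j).rankDefect_nonneg hA

theorem rankDefect_le_sum (j : Fin C.k) (hA : A ⊆ C.E) :
    rankDefect (C.M j) A ≤ ∑ l, hypExcess C.X C.t l A := by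
  simpa using C.sum_rankDefect_le {j} hA

theorem exists_one_le_rankDefect (J : Finset (Fin C.k)) (hA : A ⊆ C.E)
    (h : ∑ j ∈ J, rankDefect (C.M j) A < ∑ l, hypExcess C.X C.t l A) :
    ∃ j ∉ J, 1 ≤ rankDefect (C.M j) A := by
  by_contra! hcon
  have : ∑ j ∈ univ \ J, rankDefect (C.M j) A ≤ 0 :=
    sum_nonpos fun j hj => by have := hcon j (mem_sdiff.1 hj).2; omega
  rw [← C.sum_rankDefect hA, ← sum_sdiff (subset_univ J)] at h
  omega

theorem rankDefect_eq_zero_of_card_le (j : Fin C.k) (hA : A ⊆ C.X i)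
    (hc : (A.card : ℤ) ≤ C.t i) : rankDefect (C.M j) A = 0 := by
  have hAE := hA.trans (C.X_subset i)
  have := C.rankDefect_le_sum j hAE
  rw [sum_hypExcess_of_subset C.inter_card_le_one C.one_le_t hA] at this
  have := (C.isMatroidRankOn j).rankDefect_nonneg hAE
  omega

theorem rank_eq_sum_of_card_le (j : Fin C.k) (hA : A ⊆ C.X i)
    (hc : (A.card : ℤ) ≤ C.t i) : C.M j A = ∑ e ∈ A, C.M j {e} := by
  have := C.rankDefect_eq_zero_of_card_le j hA hc
  rw [rankDefect] at this
  omega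

theorem sum_hypExcess_of_card_eq_add_one (hS : S ⊆ C.X i) (hc : (S.card : ℤ) = C.t i + 1) :
    ∑ l, hypExcess C.X C.t l S = 1 := by
  rw [sum_hypExcess_of_subset C.inter_card_le_one C.one_le_t hS]; omega

theorem eq_of_one_le_rankDefect (hS : S ⊆ C.X i) (hc : (S.card : ℤ) = C.t i + 1)
    (hj : 1 ≤ rankDefect (C.M j) S) (hj' : 1 ≤ rankDefect (C.M j') S) : j = j' := by
  by_contra hne
  have := C.sum_rankDefect_le {j, j'} (hS.trans (C.X_subset i))
  rw [sum_pair hne, C.sum_hypExcess_of_card_eq_add_one hS hc] at this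
  omega

theorem exists_one_le_rankDefect_of_card_eq (hS : S ⊆ C.X i)
    (hc : (S.card : ℤ) = C.t i + 1) : ∃ j, 1 ≤ rankDefect (C.M j) S := by
  obtain ⟨j, -, hj⟩ := C.exists_one_le_rankDefect ∅ (hS.trans (C.X_subset i))
    (by rw [sum_empty, C.sum_hypExcess_of_card_eq_add_one hS hc]; omega)
  exact ⟨j, hj⟩

theorem two_le_rankDefect_of_erase (hV : V ⊆ C.X i) (hc : (V.card : ℤ) = C.t i + 2) (ha : a ∈ V)
    (hb : b ∈ V) (hab : a ≠ b) (hj : 1 ≤ rankDefect (C.M j) (V.erase a))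
    (hj' : 1 ≤ rankDefect (C.M j) (V.erase b)) : 2 ≤ rankDefect (C.M j) V := by
  have hVE := hV.trans (C.X_subset i)
  have h := (C.isMatroidRankOn j).rankDefect_add_le ((erase_subset a V).trans hVE)
    ((erase_subset b V).trans hVE)
  have hU : V.erase a ∪ V.erase b = V := by
    ext x; simp only [mem_union, mem_erase]; grind
  rw [hU, erase_inter, inter_erase, inter_self] at h
  have := C.rankDefect_eq_zero_of_card_le j (A := (V.erase b).erase a)
    (((erase_subset _ _).trans (erase_subset _ _)).trans hV) (by
      rw [card_erase_of_mem (mem_erase.2 ⟨hab, ha⟩), card_erase_of_mem hb]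
      have := C.one_le_t i
      omega)
  omega

/-- On a `(t + 2)`-subset of a hyperedge the total defect is `2`; two distinct colours on two
`(t + 1)`-subsets leave no room for the colour of a third one. -/
theorem eq_of_one_le_rankDefect_erase (hV : V ⊆ C.X i) (hc : (V.card : ℤ) = C.t i + 2)
    (ha : a ∈ V) (hb : b ∈ V) (hj : 1 ≤ rankDefect (C.M j) (V.erase a))
    (hj' : 1 ≤ rankDefect (C.M j') (V.erase b)) : j = j' := by
  have hVE := hV.trans (C.X_subset i)
  have herase {x : α} (hx : x ∈ V) : (((V.erase x).card : ℤ)) = C.t i + 1 := by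
    rw [card_erase_of_mem hx]; have := C.one_le_t i; omega
  have hsub {x : α} : V.erase x ⊆ C.X i := (erase_subset x V).trans hV
  rcases eq_or_ne a b with rfl | hab
  · exact C.eq_of_one_le_rankDefect hsub (herase ha) hj hj'
  obtain ⟨c, hcab⟩ : ((V.erase a).erase b).Nonempty := by
    rw [← card_pos, card_erase_of_mem (mem_erase.2 ⟨hab.symm, hb⟩), card_erase_of_mem ha]
    have := C.one_le_t i
    omega
  have hcV : c ∈ V := mem_of_mem_erase (mem_of_mem_erase hcab)
  have hca : c ≠ a := (mem_erase.1 (mem_of_mem_erase hcab)).1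
  have hcb : c ≠ b := (mem_erase.1 hcab).1
  obtain ⟨j₃, hj₃⟩ := C.exists_one_le_rankDefect_of_card_eq hsub (herase hcV)
  have htotal : ∑ l, hypExcess C.X C.t l V = 2 := by
    rw [sum_hypExcess_of_subset C.inter_card_le_one C.one_le_t hV]; omega
  have hmono {j : Fin C.k} {x : α} (h : 1 ≤ rankDefect (C.M j) (V.erase x)) :
      1 ≤ rankDefect (C.M j) V :=
    h.trans ((C.isMatroidRankOn j).rankDefect_mono (erase_subset x V) hVE)
  by_contra hjj'
  have hpair := C.sum_rankDefect_le {j, j'} hVE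
  rw [sum_pair hjj', htotal] at hpair
  by_cases h₁ : j₃ = j
  · subst h₁
    have := C.two_le_rankDefect_of_erase hV hc ha hcV hca.symm hj hj₃
    have := hmono hj'
    omega
  by_cases h₂ : j₃ = j'
  · subst h₂
    have := C.two_le_rankDefect_of_erase hV hc hb hcV hcb.symm hj' hj₃
    have := hmono hj
    omega
  have htriple := C.sum_rankDefect_le {j₃, j, j'} hVE
  rw [sum_insert (by simp [h₁, h₂]), sum_pair hjj', htotal] at htriple
  have := hmono hj
  have := hmono hj'
  have := hmono hj₃
  omega

theorem eq_of_one_le_rankDefect_of_card_eq {S' : Finset α} (hS : S ⊆ C.X i)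
    (hS' : S' ⊆ C.X i) (hc : (S.card : ℤ) = C.t i + 1) (hc' : (S'.card : ℤ) = C.t i + 1)
    (hj : 1 ≤ rankDefect (C.M j) S) (hj' : 1 ≤ rankDefect (C.M j') S') : j = j' := by
  induction hm : (S \ S').card using Nat.strong_induction_on generalizing S j with
  | _ m ih =>
  rcases Nat.eq_zero_or_pos m with rfl | hm0
  · have hSS' : S = S' := eq_of_subset_of_card_le (sdiff_eq_empty_iff_subset.1
      (card_eq_zero.1 hm)) (by omega)
    exact C.eq_of_one_le_rankDefect hS hc hj (hSS' ▸ hj')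
  obtain ⟨f, hf⟩ : (S \ S').Nonempty := card_pos.1 (hm ▸ hm0)
  obtain ⟨g, hg⟩ : (S' \ S).Nonempty := card_pos.1 (by
    rw [← card_sdiff_comm (by omega : S.card = S'.card)]; omega)
  obtain ⟨hfS, hfS'⟩ := mem_sdiff.1 hf
  obtain ⟨hgS', hgS⟩ := mem_sdiff.1 hg
  have hV : insert g S ⊆ C.X i := insert_subset (hS' hgS') hS
  have hVc : ((insert g S).card : ℤ) = C.t i + 2 := by
    rw [card_insert_of_notMem hgS]; omega
  have hS''c : (((insert g S).erase f).card : ℤ) = C.t i + 1 := by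
    rw [card_erase_of_mem (mem_insert_of_mem hfS)]; omega
  obtain ⟨j'', hj''⟩ := C.exists_one_le_rankDefect_of_card_eq
    ((erase_subset f _).trans hV) hS''c
  have hjj'' : j = j'' := C.eq_of_one_le_rankDefect_erase hV hVc (mem_insert_self g S)
    (mem_insert_of_mem hfS) (by rwa [erase_insert hgS]) hj''
  subst hjj''
  refine ih _ ?_ ((erase_subset f _).trans hV) hS''c hj'' rfl
  calc (((insert g S).erase f) \ S').card ≤ ((S \ S').erase f).card := card_le_card (by
        intro x; simp only [mem_sdiff, mem_erase, mem_insert]; grind)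
    _ < m := by rw [card_erase_of_mem hf]; omega

theorem exists_bigColor (hbig : C.t i < ((C.X i).card : ℤ)) :
    ∃ j, ∀ S ⊆ C.X i, (S.card : ℤ) = C.t i + 1 → 1 ≤ rankDefect (C.M j) S := by
  have := C.one_le_t i
  obtain ⟨S₀, hS₀, hc₀⟩ := exists_subset_card_eq
    (show (C.t i).toNat + 1 ≤ (C.X i).card by omega)
  have hc₀' : (S₀.card : ℤ) = C.t i + 1 := by omega
  obtain ⟨j, hj⟩ := C.exists_one_le_rankDefect_of_card_eq hS₀ hc₀'
  refine ⟨j, fun S hS hc => ?_⟩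
  obtain ⟨j', hj'⟩ := C.exists_one_le_rankDefect_of_card_eq hS hc
  rwa [C.eq_of_one_le_rankDefect_of_card_eq hS₀ hS hc₀' hc hj hj']

/-- The colour of a hyperedge `X i` with `t i < |X i|`: the unique colour in which its
`(t i + 1)`-subsets are dependent. -/
noncomputable def bigColor (i : Fin C.n) (hbig : C.t i < ((C.X i).card : ℤ)) : Fin C.k :=
  (C.exists_bigColor hbig).choose

theorem one_le_rankDefect_bigColor (hbig : C.t i < ((C.X i).card : ℤ)) (hS : S ⊆ C.X i)
    (hc : (S.card : ℤ) = C.t i + 1) : 1 ≤ rankDefect (C.M (C.bigColor i hbig)) S :=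
  (C.exists_bigColor hbig).choose_spec S hS hc

theorem eq_bigColor (hbig : C.t i < ((C.X i).card : ℤ)) (hS : S ⊆ C.X i)
    (hc : (S.card : ℤ) = C.t i + 1) (hj : 1 ≤ rankDefect (C.M j) S) : j = C.bigColor i hbig :=
  C.eq_of_one_le_rankDefect hS hc hj (C.one_le_rankDefect_bigColor hbig hS hc)

theorem rank_singleton_bigColor (hbig : C.t i < ((C.X i).card : ℤ)) (he : e ∈ C.X i) :
    C.M (C.bigColor i hbig) {e} = 1 := by
  have ht := C.one_le_t i
  obtain ⟨T, hT, hTc⟩ := exists_subset_card_eq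
    (show (C.t i).toNat ≤ ((C.X i).erase e).card by rw [card_erase_of_mem he]; omega)
  have heT : e ∉ T := fun h => (mem_erase.1 (hT h)).1 rfl
  have hTX : T ⊆ C.X i := hT.trans (erase_subset e _)
  have hS : insert e T ⊆ C.X i := insert_subset he hTX
  have hr := C.isMatroidRankOn (C.bigColor i hbig)
  have h1 := C.one_le_rankDefect_bigColor hbig hS (by rw [card_insert_of_notMem heT]; omega)
  rcases hr.singleton_eq_zero_or_one (C.X_subset i he) with h0 | h1
  · rw [rankDefect_erase _ (mem_insert_self e T) (hr.rank_erase_of_loop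
      (hS.trans (C.X_subset i)) (mem_insert_self e T) h0), erase_insert heT, h0,
      C.rankDefect_eq_zero_of_card_le _ hTX (by omega)] at h1
    omega
  · exact h1

theorem rank_bigColor_of_card_le (hbig : C.t i < ((C.X i).card : ℤ)) (hA : A ⊆ C.X i)
    (hc : (A.card : ℤ) ≤ C.t i) : C.M (C.bigColor i hbig) A = A.card := by
  rw [C.rank_eq_sum_of_card_le _ hA hc,
    sum_congr rfl fun e he => C.rank_singleton_bigColor hbig (hA he)]
  simp

theorem min_le_rank_bigColor (hbig : C.t i < ((C.X i).card : ℤ)) (hA : A ⊆ C.X i) :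
    min (A.card : ℤ) (C.t i) ≤ C.M (C.bigColor i hbig) A := by
  obtain ⟨T, hTA, hTc⟩ := exists_subset_card_eq (min_le_left A.card (C.t i).toNat)
  have := C.one_le_t i
  have hT : (T.card : ℤ) = min (A.card : ℤ) (C.t i) := by omega
  rw [← hT, ← C.rank_bigColor_of_card_le hbig (hTA.trans hA) (by omega)]
  exact (C.isMatroidRankOn _).mono hTA (hA.trans (C.X_subset i))

theorem rank_bigColor (hbig : C.t i < ((C.X i).card : ℤ)) (hA : A ⊆ C.X i) :
    C.M (C.bigColor i hbig) A = min (A.card : ℤ) (C.t i) := by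
  refine le_antisymm ?_ (C.min_le_rank_bigColor hbig hA)
  have hr := C.isMatroidRankOn (C.bigColor i hbig)
  induction A using Finset.strongInduction with
  | H A ih =>
  have hAE := hA.trans (C.X_subset i)
  rcases lt_trichotomy (A.card : ℤ) (C.t i + 1) with hc | hc | hc
  · rw [C.rank_bigColor_of_card_le hbig hA (by omega)]; omega
  · have := C.one_le_rankDefect_bigColor hbig hA hc
    rw [rankDefect, sum_congr rfl fun e he => C.rank_singleton_bigColor hbig (hA he)] at this
    simp only [sum_const, nsmul_eq_mul, mul_one] at this
    omega
  obtain ⟨x, hx, y, hy, hxy⟩ := one_lt_card.1 (show 1 < A.card by have := C.one_le_t i; omega)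
  have hU := ih (A.erase x) (erase_ssubset hx) ((erase_subset x A).trans hA)
  have hV := ih (A.erase y) (erase_ssubset hy) ((erase_subset y A).trans hA)
  have hI := C.min_le_rank_bigColor hbig (((erase_subset y _).trans (erase_subset x A)).trans hA)
  have h := hr.submod ((erase_subset x A).trans hAE) ((erase_subset y A).trans hAE)
  have hUV : A.erase x ∪ A.erase y = A := by
    ext z; simp only [mem_union, mem_erase]; grind
  rw [hUV, erase_inter, inter_erase, inter_self] at h
  rw [card_erase_of_mem (mem_erase.2 ⟨Ne.symm hxy, hy⟩), card_erase_of_mem hx,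
    erase_right_comm] at hI
  omega

theorem lt_card_of_t_eq_one (hl : C.t l = 1) (hx : x ∈ C.X l) (hy : y ∈ C.X l) (hxy : x ≠ y) :
    C.t l < ((C.X l).card : ℤ) := by
  have := card_le_card (insert_subset hx (singleton_subset_iff.2 hy))
  rw [card_pair hxy] at this
  omega

theorem isParallel_bigColor (hl : C.t l = 1) (hbig : C.t l < ((C.X l).card : ℤ))
    (hx : x ∈ C.X l) (hy : y ∈ C.X l) (hxy : x ≠ y) :
    IsParallel (C.M (C.bigColor l hbig)) x y :=
  ((C.isMatroidRankOn _).isParallel_iff hxy (C.X_subset l hx) (C.X_subset l hy)).2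
    (C.one_le_rankDefect_bigColor hbig (insert_subset hx (singleton_subset_iff.2 hy))
      (by rw [card_pair hxy, hl]; rfl))

theorem eq_bigColor_of_isParallel (hl : C.t l = 1) (hbig : C.t l < ((C.X l).card : ℤ))
    (hx : x ∈ C.X l) (hy : y ∈ C.X l) (h : IsParallel (C.M j) x y) : j = C.bigColor l hbig :=
  C.eq_bigColor hbig (insert_subset hx (singleton_subset_iff.2 hy))
    (by rw [card_pair h.1, hl]; rfl) h.rankDefect_eq_one.ge

/-- A pair has positive total excess only inside a hyperedge of threshold `1`. -/
theorem exists_line_of_isParallel (h : IsParallel (C.M j) x y) (hx : x ∈ C.E) (hy : y ∈ C.E) :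
    ∃ l, x ∈ C.X l ∧ y ∈ C.X l ∧ C.t l = 1 := by
  by_contra! hcon
  have hzero : ∑ l, hypExcess C.X C.t l {x, y} = 0 := sum_eq_zero fun l _ => by
    have := C.one_le_t l
    apply hypExcess_eq_zero
    by_cases hxl : x ∈ C.X l <;> by_cases hyl : y ∈ C.X l
    · have := hcon l hxl hyl
      rw [inter_eq_left.2 (insert_subset hxl (singleton_subset_iff.2 hyl)), card_pair h.1]
      omega
    all_goals simp [insert_inter_of_mem, insert_inter_of_notMem, singleton_inter_of_mem,
      singleton_inter_of_notMem, *]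
    all_goals omega
  have := C.rankDefect_le_sum j (insert_subset hx (singleton_subset_iff.2 hy))
  rw [hzero, h.rankDefect_eq_one] at this
  omega

theorem not_isParallel_of_two_le_t (hx : x ∈ C.X i) (hy : y ∈ C.X i) (ht : 2 ≤ C.t i) :
    ¬ IsParallel (C.M j) x y := fun h => by
  obtain ⟨l, hxl, hyl, htl⟩ := C.exists_line_of_isParallel h (C.X_subset i hx) (C.X_subset i hy)
  rw [eq_of_two_mem C.inter_card_le_one h.1 hxl hyl hx hy] at htl
  omega

theorem rankDefect_pair_eq_zero (h : IsParallel (C.M j) x y) (hx : x ∈ C.E) (hy : y ∈ C.E)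
    (hj' : j' ≠ j) : rankDefect (C.M j') {x, y} = 0 := by
  have hxy : {x, y} ⊆ C.E := insert_subset hx (singleton_subset_iff.2 hy)
  have hpair := C.sum_rankDefect_le {j', j} hxy
  have htotal := sum_hypExcess_insert_le C.inter_card_le_one C.one_le_t
    (notMem_singleton.2 h.1)
  rw [sum_hypExcess_singleton C.one_le_t, card_singleton] at htotal
  rw [sum_pair hj', h.rankDefect_eq_one] at hpair
  have := (C.isMatroidRankOn j').rankDefect_nonneg hxy
  omega

theorem sum_hypExcess_of_card_eq_three (hi : C.t i = 1) (hu : u ∈ C.X i) (hv : v ∈ C.X i)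
    (hw : w ∈ C.X i) (huv : u ≠ v) (huw : u ≠ w) (hvw : v ≠ w) :
    ∑ l, hypExcess C.X C.t l {u, v, w} = 2 := by
  rw [sum_hypExcess_of_subset C.inter_card_le_one C.one_le_t (i := i)
    (by simp [insert_subset_iff, *]), card_insert_of_notMem (by simp [*]), card_pair hvw, hi]
  rfl

/-- Otherwise, by supermodularity, `τ` would have defect `2` on `{z, u, v, w}`, but its defect
on the collinear `{u, v, w}` is `0` and one point raises the defect by at most one. -/
theorem rankDefect_lt_one_of_pencil {i₀ : Fin C.n} {τ : Fin C.k} (hi₀ : C.t i₀ = 1)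
    (hz : z ∈ C.E) (hu : u ∈ C.X i₀) (hv : v ∈ C.X i₀) (hw : w ∈ C.X i₀)
    (huv : u ≠ v) (huw : u ≠ w) (hvw : v ≠ w) (hzu : IsParallel (C.M j) z u)
    (hzv : IsParallel (C.M j) z v) (hzw : IsParallel (C.M j) z w) (hτ : τ ≠ j)
    (h : 1 ≤ rankDefect (C.M τ) {z, u, v}) : rankDefect (C.M τ) {z, u, w} < 1 := by
  have hr := C.isMatroidRankOn τ
  have huE := C.X_subset i₀ hu
  have hvE := C.X_subset i₀ hv
  have hwE := C.X_subset i₀ hw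
  have huvw : {u, v, w} ⊆ C.E := by simp [insert_subset_iff, *]
  have hcollinear : rankDefect (C.M τ) {u, v, w} = 0 := by
    have hr' := C.isMatroidRankOn j
    have hj := hr'.rankDefect_insert_of_isParallel (s := {v, w}) (by simp [huv, huw]) huvw
      (by simp only [mem_insert, mem_singleton, forall_eq_or_imp, forall_eq]
          exact ⟨hr'.isParallel_trans hz huE hvE hzu hzv huv,
            hr'.isParallel_trans hz huE hwE hzu hzw huw⟩)
    have hpair := C.sum_rankDefect_le {τ, j} huvw
    rw [sum_pair hτ, hj, card_pair hvw,
      C.sum_hypExcess_of_card_eq_three hi₀ hu hv hw huv huw hvw] at hpair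
    have := hr.rankDefect_nonneg huvw
    push_cast at hpair
    omega
  by_contra! h'
  have hsuper := hr.rankDefect_add_le (A := {z, u, v}) (B := {z, u, w})
    (by simp [insert_subset_iff, *]) (by simp [insert_subset_iff, *])
  have hU : ({z, u, v} ∪ {z, u, w} : Finset α) = insert z {u, v, w} := by
    ext; simp
  have hI : ({z, u, v} ∩ {z, u, w} : Finset α) = {z, u} := by
    ext a; simp only [mem_inter, mem_insert, mem_singleton]; grind
  rw [hU, hI, C.rankDefect_pair_eq_zero hzu hz huE hτ] at hsuper
  have := hr.rankDefect_insert_le huvw hz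
  omega

theorem exists_one_le_rankDefect_triple {i₀ : Fin C.n} (hi₀ : C.t i₀ = 1) (hz : z ∈ C.E)
    (hzi₀ : z ∉ C.X i₀) (hu : u ∈ C.X i₀) (hv : v ∈ C.X i₀) (huv : u ≠ v)
    (hzu : IsParallel (C.M j) z u) (hzv : IsParallel (C.M j) z v) :
    ∃ τ ≠ j, 1 ≤ rankDefect (C.M τ) {z, u, v} := by
  have huE := C.X_subset i₀ hu
  have hvE := C.X_subset i₀ hv
  have hT : {z, u, v} ⊆ C.E := by simp [insert_subset_iff, *]
  obtain ⟨lu, hzlu, hulu, htlu⟩ := C.exists_line_of_isParallel hzu hz huE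
  obtain ⟨lv, hzlv, hvlv, htlv⟩ := C.exists_line_of_isParallel hzv hz hvE
  have hlu : lu ≠ i₀ := fun h => hzi₀ (h ▸ hzlu)
  have hlv : lv ≠ i₀ := fun h => hzi₀ (h ▸ hzlv)
  have hluv : lu ≠ lv := fun h =>
    hlu (eq_of_two_mem C.inter_card_le_one huv hulu (h ▸ hvlv) hu hv)
  have hexcess : 3 ≤ ∑ l, hypExcess C.X C.t l {z, u, v} := by
    refine le_trans ?_ (sum_le_sum_of_subset_of_nonneg (subset_univ {i₀, lu, lv})
      fun _ _ _ => hypExcess_nonneg)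
    rw [sum_insert (by simp [hlu.symm, hlv.symm]), sum_pair hluv]
    have := one_le_hypExcess (X := C.X) (A := {z, u, v}) hi₀ huv (by simp [hu]) (by simp [hv])
    have := one_le_hypExcess (X := C.X) (A := {z, u, v}) htlu hzu.1 (by simp [hzlu])
      (by simp [hulu])
    have := one_le_hypExcess (X := C.X) (A := {z, u, v}) htlv hzv.1 (by simp [hzlv])
      (by simp [hvlv])
    omega
  have hj := (C.isMatroidRankOn j).rankDefect_insert_of_isParallel (s := {u, v})
    (by simp [hzu.1, hzv.1]) hT (by simpa using ⟨hzu, hzv⟩)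
  rw [card_pair huv] at hj
  obtain ⟨τ, hτ, h⟩ := C.exists_one_le_rankDefect {j} hT (by rw [sum_singleton, hj]; omega)
  exact ⟨τ, by simpa using hτ, h⟩

/-- Each triple `{z, xᵢ, xⱼ}` needs a colour besides `j`; two triples cannot share it
(`rankDefect_lt_one_of_pencil`), and three distinct ones overflow the total excess `5` of
`{z, x₁, x₂, x₃}`, on which `j` alone has defect `3`. -/
theorem not_isParallel_of_pencil {i₀ : Fin C.n} {x₁ x₂ x₃ : α} (hi₀ : C.t i₀ = 1)
    (hz : z ∈ C.E) (hzi₀ : z ∉ C.X i₀) (h₁ : x₁ ∈ C.X i₀) (h₂ : x₂ ∈ C.X i₀)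
    (h₃ : x₃ ∈ C.X i₀) (h₁₂ : x₁ ≠ x₂) (h₁₃ : x₁ ≠ x₃) (h₂₃ : x₂ ≠ x₃)
    (hp₁ : IsParallel (C.M j) z x₁) (hp₂ : IsParallel (C.M j) z x₂) :
    ¬ IsParallel (C.M j) z x₃ := fun hp₃ => by
  obtain ⟨τ₁₂, hτ₁₂, hd₁₂⟩ := C.exists_one_le_rankDefect_triple hi₀ hz hzi₀ h₁ h₂ h₁₂ hp₁ hp₂
  obtain ⟨τ₁₃, hτ₁₃, hd₁₃⟩ := C.exists_one_le_rankDefect_triple hi₀ hz hzi₀ h₁ h₃ h₁₃ hp₁ hp₃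
  obtain ⟨τ₂₃, hτ₂₃, hd₂₃⟩ := C.exists_one_le_rankDefect_triple hi₀ hz hzi₀ h₂ h₃ h₂₃ hp₂ hp₃
  by_cases e₁ : τ₁₂ = τ₁₃
  · have := C.rankDefect_lt_one_of_pencil hi₀ hz h₁ h₂ h₃ h₁₂ h₁₃ h₂₃ hp₁ hp₂ hp₃ hτ₁₂ hd₁₂
    rw [e₁] at this
    omega
  by_cases e₂ : τ₁₂ = τ₂₃
  · have := C.rankDefect_lt_one_of_pencil hi₀ hz h₂ h₁ h₃ h₁₂.symm h₂₃ h₁₃ hp₂ hp₁ hp₃ hτ₁₂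
      (by rwa [pair_comm])
    rw [e₂] at this
    omega
  by_cases e₃ : τ₁₃ = τ₂₃
  · have := C.rankDefect_lt_one_of_pencil hi₀ hz h₃ h₁ h₂ h₁₃.symm h₂₃.symm h₁₂ hp₃ hp₁ hp₂
      hτ₁₃ (by rwa [pair_comm])
    rw [e₃, pair_comm] at this
    omega
  have hz₁₂₃ : z ∉ ({x₁, x₂, x₃} : Finset α) := by simp [hp₁.1, hp₂.1, hp₃.1]
  have hQ : insert z {x₁, x₂, x₃} ⊆ C.E := by
    simp [insert_subset_iff, hz, C.X_subset i₀ h₁, C.X_subset i₀ h₂, C.X_subset i₀ h₃]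
  have hdj := (C.isMatroidRankOn j).rankDefect_insert_of_isParallel hz₁₂₃ hQ
    (by simpa using ⟨hp₁, hp₂, hp₃⟩)
  rw [card_insert_of_notMem (by simp [h₁₂, h₁₃]), card_pair h₂₃] at hdj
  have htotal := sum_hypExcess_insert_le C.inter_card_le_one C.one_le_t hz₁₂₃
  rw [C.sum_hypExcess_of_card_eq_three hi₀ h₁ h₂ h₃ h₁₂ h₁₃ h₂₃,
    card_insert_of_notMem (by simp [h₁₂, h₁₃]), card_pair h₂₃] at htotal
  have hmono {τ : Fin C.k} {T : Finset α} (hT : T ⊆ insert z {x₁, x₂, x₃})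
      (h : 1 ≤ rankDefect (C.M τ) T) : 1 ≤ rankDefect (C.M τ) (insert z {x₁, x₂, x₃}) :=
    h.trans ((C.isMatroidRankOn τ).rankDefect_mono hT hQ)
  have := hmono (by intro a; simp only [mem_insert, mem_singleton]; tauto) hd₁₂
  have := hmono (by intro a; simp only [mem_insert, mem_singleton]; tauto) hd₁₃
  have := hmono (by intro a; simp only [mem_insert, mem_singleton]; tauto) hd₂₃
  have hsum := C.sum_rankDefect_le {j, τ₁₂, τ₁₃, τ₂₃} hQ
  rw [sum_insert (by simp [hτ₁₂.symm, hτ₁₃.symm, hτ₂₃.symm]), sum_insert (by simp [e₁, e₂]),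
    sum_pair e₃, hdj] at hsum
  push_cast at hsum
  omega

theorem not_isParallel_bigColor_of_three_le_card (hl : C.t l = 1)
    (hbig : C.t l < ((C.X l).card : ℤ)) (h3 : 3 ≤ (C.X l).card) (he : e ∈ C.X l)
    (hz : z ∈ C.E) (hzl : z ∉ C.X l) : ¬ IsParallel (C.M (C.bigColor l hbig)) z e := by
  intro hze
  obtain ⟨y, hy, y₂, hy₂, hyy₂⟩ := one_lt_card.1
    (show 1 < ((C.X l).erase e).card by rw [card_erase_of_mem he]; omega)
  rw [mem_erase] at hy hy₂
  have hr := C.isMatroidRankOn (C.bigColor l hbig)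
  have hzy (y) (hy : y ∈ C.X l) (hye : y ≠ e) : IsParallel (C.M (C.bigColor l hbig)) z y :=
    hr.isParallel_trans (C.X_subset l he) hz (C.X_subset l hy) hze.symm
      (C.isParallel_bigColor hl hbig he hy hye.symm) fun h => hzl (h ▸ hy)
  exact C.not_isParallel_of_pencil hl hz hzl hy.2 hy₂.2 he hyy₂ hy.1 hy₂.1
    (hzy y hy.2 hy.1) (hzy y₂ hy₂.2 hy₂.1) hze

theorem eq_pair_of_card_le (hx : x ∈ C.X i) (hy : y ∈ C.X i) (hxy : x ≠ y)
    (hc : ¬ 3 ≤ (C.X i).card) : C.X i = {x, y} :=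
  (eq_of_subset_of_card_le (insert_subset hx (singleton_subset_iff.2 hy))
    (by rw [card_pair hxy]; omega)).symm

/-- Two intersecting lines with threshold `1` and the same colour would produce, through a
third line and (H3), a point parallel to three points of a line. -/
theorem bigColor_ne_of_t_eq_one {i' : Fin C.n} (hii' : i ≠ i') (hi : C.t i = 1)
    (hi' : C.t i' = 1) (hbig : C.t i < ((C.X i).card : ℤ))
    (hbig' : C.t i' < ((C.X i').card : ℤ)) (he : e ∈ C.X i) (he' : e ∈ C.X i') :
    C.bigColor i hbig ≠ C.bigColor i' hbig' := by
  intro hcol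
  obtain ⟨y, hy⟩ : ((C.X i).erase e).Nonempty := by
    rw [← card_pos, card_erase_of_mem he]; omega
  obtain ⟨z, hz⟩ : ((C.X i').erase e).Nonempty := by
    rw [← card_pos, card_erase_of_mem he']; omega
  rw [mem_erase] at hy hz
  have heE := C.X_subset i he
  have hyE := C.X_subset i hy.2
  have hzE := C.X_subset i' hz.2
  have hyi' : y ∉ C.X i' := fun h =>
    hii' (eq_of_two_mem C.inter_card_le_one hy.1 hy.2 he h he')
  have hzi : z ∉ C.X i := fun h =>
    hii' (eq_of_two_mem C.inter_card_le_one hz.1 h he hz.2 he')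
  have hyz : y ≠ z := fun h => hyi' (h ▸ hz.2)
  have hey := C.isParallel_bigColor hi hbig he hy.2 hy.1.symm
  have hez := C.isParallel_bigColor hi' hbig' he' hz.2 hz.1.symm
  rw [← hcol] at hez
  by_cases h3 : 3 ≤ (C.X i).card
  · exact C.not_isParallel_bigColor_of_three_le_card hi hbig h3 he hzE hzi hez.symm
  by_cases h3' : 3 ≤ (C.X i').card
  · rw [hcol] at hey
    exact C.not_isParallel_bigColor_of_three_le_card hi' hbig' h3' he' hyE hyi' hey.symm
  have hyz' := (C.isMatroidRankOn _).isParallel_trans heE hyE hzE hey hez hyz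
  obtain ⟨l, hyl, hzl, hl⟩ := C.exists_line_of_isParallel hyz' hyE hzE
  have hbigl := C.lt_card_of_t_eq_one hl hyl hzl hyz
  have hel : e ∉ C.X l := fun h =>
    hzi (eq_of_two_mem C.inter_card_le_one hy.1.symm he hy.2 h hyl ▸ hzl)
  by_cases h3l : 3 ≤ (C.X l).card
  · rw [C.eq_bigColor_of_isParallel hl hbigl hyl hzl hyz'] at hey
    exact C.not_isParallel_bigColor_of_three_le_card hl hbigl h3l hyl heE hel hey
  exact C.not_triangle ⟨e, y, z, i, i', l, hy.1.symm, hz.1.symm, hyz,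
    C.eq_pair_of_card_le he hy.2 hy.1.symm h3, C.eq_pair_of_card_le he' hz.2 hz.1.symm h3',
    C.eq_pair_of_card_le hyl hzl hyz h3l⟩

/-- Lines (hyperedges with threshold `1`) through a point of `X i \ {e}` and a point of
`X i' \ {e}`: apart from `X i` and `X i'` themselves, they carry the excess of
`(X i ∪ X i') \ {e}`. -/
def crossingLines (i i' : Fin C.n) (e : α) : Finset (Fin C.n) :=
  univ.filter fun l => C.t l = 1 ∧ ((C.X i).erase e ∩ C.X l).Nonempty ∧
    ((C.X i').erase e ∩ C.X l).Nonempty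

theorem hypExcess_le_of_ne (hli : l ≠ i) (hli' : l ≠ i') :
    hypExcess C.X C.t l ((C.X i ∪ C.X i').erase e) ≤
      if l ∈ C.crossingLines i i' e then 1 else 0 := by
  have hsplit : (C.X i ∪ C.X i').erase e ∩ C.X l =
      ((C.X i).erase e ∩ C.X l) ∪ ((C.X i').erase e ∩ C.X l) := by
    rw [erase_union_distrib, union_inter_distrib_right]
  have hle {i : Fin C.n} (hli : l ≠ i) : ((C.X i).erase e ∩ C.X l).card ≤ 1 :=
    (card_le_card (inter_subset_inter_right (erase_subset e _))).trans
      (C.inter_card_le_one i l (Ne.symm hli))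
  have hcard := hsplit ▸ card_union_le ((C.X i).erase e ∩ C.X l) ((C.X i').erase e ∩ C.X l)
  have ha := hle hli
  have hb := hle hli'
  have := C.one_le_t l
  rw [hypExcess]
  split_ifs with h
  · omega
  simp only [crossingLines, mem_filter, mem_univ, true_and, not_and_or,
    not_nonempty_iff_eq_empty] at h
  rcases h with h | h | h
  · omega
  all_goals rw [h, card_empty] at hcard; omega

theorem sum_hypExcess_erase_union_le (hii' : i ≠ i') (he : e ∈ C.X i) (he' : e ∈ C.X i')
    (hbig : C.t i < ((C.X i).card : ℤ)) (hbig' : C.t i' < ((C.X i').card : ℤ)) :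
    ∑ l, hypExcess C.X C.t l ((C.X i ∪ C.X i').erase e) ≤
      ((C.X i).card - 1 - C.t i) + ((C.X i').card - 1 - C.t i') +
        (C.crossingLines i i' e).card := by
  have hside {p q : Fin C.n} (he : e ∈ C.X p) (hbig : C.t p < ((C.X p).card : ℤ)) :
      hypExcess C.X C.t p ((C.X p ∪ C.X q).erase e) = (C.X p).card - 1 - C.t p := by
    have hI : (C.X p ∪ C.X q).erase e ∩ C.X p = (C.X p).erase e := by ext; simp
    have hc : (((C.X p).erase e).card : ℤ) = (C.X p).card - 1 := by
      rw [card_erase_of_mem he, Nat.cast_sub (card_pos.2 ⟨e, he⟩)]; rfl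
    rw [hypExcess_eq_sub] <;> rw [hI, hc]; omega
  have hside' : hypExcess C.X C.t i' ((C.X i ∪ C.X i').erase e) =
      (C.X i').card - 1 - C.t i' := by
    rw [union_comm]; exact hside he' hbig'
  have hrest : ∑ l ∈ (univ.erase i).erase i', hypExcess C.X C.t l ((C.X i ∪ C.X i').erase e)
      ≤ (C.crossingLines i i' e).card := calc
    _ ≤ ∑ l ∈ (univ.erase i).erase i', if l ∈ C.crossingLines i i' e then (1 : ℤ) else 0 :=
      sum_le_sum fun l hl => by
        rw [mem_erase, mem_erase] at hl
        exact C.hypExcess_le_of_ne hl.2.1 hl.1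
    _ ≤ ∑ l, if l ∈ C.crossingLines i i' e then (1 : ℤ) else 0 :=
      sum_le_sum_of_subset_of_nonneg (subset_univ _) fun _ _ _ => by split_ifs <;> omega
    _ = _ := by simp
  rw [← add_sum_erase _ _ (mem_univ i), ← add_sum_erase _ _ (mem_erase.2 ⟨hii'.symm, mem_univ i'⟩),
    hside he hbig, hside']
  omega

/-- Crossing lines on which a colour `τ ≠ bigColor i` is parallel meet `X i'` in distinct
points, since two points of `X i` are never `τ`-parallel. -/
theorem card_le_rankDefect_of_crossing {L : Finset (Fin C.n)} {p q : Fin C.n → α}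
    (hii' : i ≠ i') (he : e ∈ C.X i) (he' : e ∈ C.X i') (hbig : C.t i < ((C.X i).card : ℤ))
    (hτ : τ ≠ C.bigColor i hbig) (hp : ∀ l ∈ L, p l ∈ (C.X i).erase e ∩ C.X l)
    (hq : ∀ l ∈ L, q l ∈ (C.X i').erase e ∩ C.X l)
    (hL : ∀ l ∈ L, IsParallel (C.M τ) (p l) (q l)) :
    (L.card : ℤ) ≤ rankDefect (C.M τ) ((C.X i ∪ C.X i').erase e) := by
  simp only [mem_inter, mem_erase] at hp hq
  have hr := C.isMatroidRankOn τ
  have hcommon {x : α} (hx : x ∈ C.X i) (hx' : x ∈ C.X i') : x = e := by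
    by_contra hxe
    exact hii' (eq_of_two_mem C.inter_card_le_one hxe hx he hx' he')
  refine hr.card_le_rankDefect hL (fun l hl => mem_erase.2 ⟨(hp l hl).1.1, mem_union_left _
    (hp l hl).1.2⟩) (fun l hl => mem_erase.2 ⟨(hq l hl).1.1, mem_union_right _ (hq l hl).1.2⟩)
    (fun l₁ hl₁ l₂ hl₂ hqq => ?_)
    (fun l hl l' hl' h => (hp l hl).1.1 (hcommon (hp l hl).1.2 (h ▸ (hq l' hl').1.2)))
    ((erase_subset _ _).trans (union_subset (C.X_subset i) (C.X_subset i')))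
  by_contra hne
  have hp₁ := hp l₁ hl₁
  have hp₂ := hp l₂ hl₂
  have hq₁ := hq l₁ hl₁
  have hpq {l : Fin C.n} (hl : l ∈ L) : p l ≠ q l := fun h =>
    (hp l hl).1.1 (hcommon (hp l hl).1.2 (h ▸ (hq l hl).1.2))
  have hpp : p l₁ ≠ p l₂ := fun h => hne (eq_of_two_mem C.inter_card_le_one (hpq hl₁)
    hp₁.2 hq₁.2 (h ▸ hp₂.2) (hqq ▸ (hq l₂ hl₂).2))
  have hqE := C.X_subset i' hq₁.1.2
  have hpar := hr.isParallel_trans hqE (C.X_subset i hp₁.1.2) (C.X_subset i hp₂.1.2)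
    (hL l₁ hl₁).symm (hqq ▸ (hL l₂ hl₂).symm) hpp
  by_cases hti : C.t i = 1
  · exact hτ (C.eq_bigColor_of_isParallel hti hbig hp₁.1.2 hp₂.1.2 hpar)
  · exact C.not_isParallel_of_two_le_t hp₁.1.2 hp₂.1.2 (by have := C.one_le_t i; omega) hpar

theorem card_crossingLines_le (hii' : i ≠ i') (he : e ∈ C.X i) (he' : e ∈ C.X i')
    (hbig : C.t i < ((C.X i).card : ℤ))
    (hlines : ∀ l x (hbigl : C.t l < ((C.X l).card : ℤ)), C.t l = 1 → l ≠ i → x ∈ C.X i →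
      x ∈ C.X l → C.bigColor l hbigl ≠ C.bigColor i hbig) :
    ((C.crossingLines i i' e).card : ℤ) ≤
      ∑ τ ∈ univ.erase (C.bigColor i hbig), rankDefect (C.M τ) ((C.X i ∪ C.X i').erase e) := by
  classical
  have hex (l) (hl : l ∈ C.crossingLines i i' e) :
      ∃ x y, x ∈ (C.X i).erase e ∩ C.X l ∧ y ∈ (C.X i').erase e ∩ C.X l := by
    simp only [crossingLines, mem_filter] at hl
    exact ⟨_, _, hl.2.2.1.choose_spec, hl.2.2.2.choose_spec⟩
  have : Nonempty α := ⟨e⟩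
  choose! p q hp hq using hex
  have hcolor (l) (hl : l ∈ C.crossingLines i i' e) :
      ∃ τ ∈ univ.erase (C.bigColor i hbig), IsParallel (C.M τ) (p l) (q l) := by
    have htl : C.t l = 1 := (mem_filter.1 hl).2.1
    have hp' := hp l hl
    have hq' := hq l hl
    simp only [mem_inter, mem_erase] at hp' hq'
    have hpq : p l ≠ q l := fun h => hp'.1.1 (by
      by_contra hpe
      exact hii' (eq_of_two_mem C.inter_card_le_one hpe hp'.1.2 he (h ▸ hq'.1.2) he'))
    have hbigl := C.lt_card_of_t_eq_one htl hp'.2 hq'.2 hpq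
    have hli : l ≠ i := fun h => hq'.1.1 (by
      by_contra hqe
      exact hii' (eq_of_two_mem C.inter_card_le_one hqe (h ▸ hq'.2) he hq'.1.2 he'))
    exact ⟨C.bigColor l hbigl, mem_erase.2 ⟨hlines l (p l) hbigl htl hli hp'.1.2 hp'.2,
      mem_univ _⟩, C.isParallel_bigColor htl hbigl hp'.2 hq'.2 hpq⟩
  calc ((C.crossingLines i i' e).card : ℤ)
      ≤ (((univ.erase (C.bigColor i hbig)).biUnion fun τ =>
          (C.crossingLines i i' e).filter fun l => IsParallel (C.M τ) (p l) (q l)).card : ℤ) := by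
        refine Nat.cast_le.2 (card_le_card fun l hl => ?_)
        obtain ⟨τ, hτ, hpar⟩ := hcolor l hl
        exact mem_biUnion.2 ⟨τ, hτ, mem_filter.2 ⟨hl, hpar⟩⟩
    _ ≤ ∑ τ ∈ univ.erase (C.bigColor i hbig),
          (((C.crossingLines i i' e).filter fun l => IsParallel (C.M τ) (p l) (q l)).card : ℤ) :=
        mod_cast card_biUnion_le
    _ ≤ _ := sum_le_sum fun τ hτ => C.card_le_rankDefect_of_crossing hii' he he' hbig
        (mem_erase.1 hτ).1 (fun l hl => hp l (mem_filter.1 hl).1)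
        (fun l hl => hq l (mem_filter.1 hl).1) fun l hl => (mem_filter.1 hl).2

/-- In a common colour, `X i ∪ X i'` has rank at most `t i + t i' - 1`, while all its points are
non-loops. -/
theorem le_rankDefect_of_bigColor_eq (hii' : i ≠ i') (he : e ∈ C.X i) (he' : e ∈ C.X i')
    (hbig : C.t i < ((C.X i).card : ℤ)) (hbig' : C.t i' < ((C.X i').card : ℤ))
    (hcol : C.bigColor i hbig = C.bigColor i' hbig') :
    ((C.X i).card + (C.X i').card - 2) - (C.t i + C.t i' - 1) ≤
      rankDefect (C.M (C.bigColor i hbig)) ((C.X i ∪ C.X i').erase e) := by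
  have hr := C.isMatroidRankOn (C.bigColor i hbig)
  have hUE := union_subset (C.X_subset i) (C.X_subset i')
  have hI : C.X i ∩ C.X i' = {e} := eq_singleton_iff_unique_mem.2 ⟨mem_inter.2 ⟨he, he'⟩,
    fun x hx => by
      by_contra hxe
      exact hii' (eq_of_two_mem C.inter_card_le_one hxe (mem_inter.1 hx).1 he
        (mem_inter.1 hx).2 he')⟩
  have hsingle (a) (ha : a ∈ C.X i ∪ C.X i') : C.M (C.bigColor i hbig) {a} = 1 := by
    rcases mem_union.1 ha with ha | ha
    · exact C.rank_singleton_bigColor hbig ha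
    · exact hcol ▸ C.rank_singleton_bigColor hbig' ha
  have hsub := hr.submod (C.X_subset i) (C.X_subset i')
  have hrank' := C.rank_bigColor hbig' (subset_refl (C.X i'))
  rw [← hcol] at hrank'
  rw [hI, hsingle e (mem_union_left _ he), C.rank_bigColor hbig subset_rfl, hrank'] at hsub
  have hmono := hr.mono (erase_subset e _) hUE
  have hcard := card_union_add_card_inter (C.X i) (C.X i')
  rw [hI, card_singleton] at hcard
  rw [rankDefect, sum_congr rfl fun a ha => hsingle a (mem_of_mem_erase ha)]
  simp only [sum_const, nsmul_eq_mul, mul_one]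
  rw [card_erase_of_mem (mem_union_left _ he)]
  omega

/-- Comparing the total defect of `(X i ∪ X i') \ {e}` with its total excess: a common colour
would have to be supplemented by one other colour per crossing line, one too many. -/
theorem bigColor_ne_of_lines (hii' : i ≠ i') (he : e ∈ C.X i) (he' : e ∈ C.X i')
    (hbig : C.t i < ((C.X i).card : ℤ)) (hbig' : C.t i' < ((C.X i').card : ℤ))
    (hlines : ∀ l x (hbigl : C.t l < ((C.X l).card : ℤ)), C.t l = 1 → l ≠ i → x ∈ C.X i →
      x ∈ C.X l → C.bigColor l hbigl ≠ C.bigColor i hbig) :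
    C.bigColor i hbig ≠ C.bigColor i' hbig' := by
  intro hcol
  have htotal := C.sum_rankDefect ((erase_subset e _).trans
    (union_subset (C.X_subset i) (C.X_subset i')))
  rw [← add_sum_erase _ _ (mem_univ (C.bigColor i hbig))] at htotal
  have := C.le_rankDefect_of_bigColor_eq hii' he he' hbig hbig' hcol
  have := C.card_crossingLines_le hii' he he' hbig hlines
  have := C.sum_hypExcess_erase_union_le hii' he he' hbig hbig'
  omega

theorem bigColor_ne (hii' : i ≠ i') (he : e ∈ C.X i) (he' : e ∈ C.X i')
    (hbig : C.t i < ((C.X i).card : ℤ)) (hbig' : C.t i' < ((C.X i').card : ℤ)) :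
    C.bigColor i hbig ≠ C.bigColor i' hbig' := by
  have hmixed {a b : Fin C.n} {x : α} (hab : a ≠ b) (ha : C.t a = 1)
      (hbiga : C.t a < ((C.X a).card : ℤ)) (hbigb : C.t b < ((C.X b).card : ℤ))
      (hxa : x ∈ C.X a) (hxb : x ∈ C.X b) : C.bigColor a hbiga ≠ C.bigColor b hbigb := by
    by_cases hb : C.t b = 1
    · exact C.bigColor_ne_of_t_eq_one hab ha hb hbiga hbigb hxa hxb
    exact C.bigColor_ne_of_lines hab hxa hxb hbiga hbigb fun l y hbigl hl hla hya hyl =>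
      C.bigColor_ne_of_t_eq_one hla hl ha hbigl hbiga hyl hya
  by_cases hi : C.t i = 1
  · exact hmixed hii' hi hbig hbig' he he'
  by_cases hi' : C.t i' = 1
  · exact (hmixed hii'.symm hi' hbig' hbig he' he).symm
  exact C.bigColor_ne_of_lines hii' he he' hbig hbig' fun l y hbigl hl hli hyi hyl =>
    hmixed hli hl hbigl hbig hyl hyi

theorem card_eq_one_of_not_lt (h : ¬ C.t i < ((C.X i).card : ℤ)) :
    (C.X i).card = 1 ∧ C.t i = 1 := by
  have := C.t_le_card i
  rcases C.threshold i with h1 | ⟨-, h2⟩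
  · omega
  · exact absurd h2 h

theorem card_filter_rank_singleton_eq_one (he : e ∈ C.E) :
    (univ.filter fun j => C.M j {e} = 1).card = hypW C.X e := by
  have h := C.hypRho_eq_sum {e} (singleton_subset_iff.2 he)
  rw [hypRho_singleton C.one_le_t, ← sum_congr rfl fun j _ =>
    (show (if C.M j {e} = 1 then 1 else 0 : ℤ) = C.M j {e} by
      rcases (C.isMatroidRankOn j).singleton_eq_zero_or_one he with h | h <;> simp [h]),
    sum_boole] at h
  exact_mod_cast h.symm

/-- At most `w(e) - 1` big hyperedges pass through the point of `X i = {e}`, but `e` is a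
non-loop in `w(e)` colours. -/
theorem exists_smallColor (h : ¬ C.t i < ((C.X i).card : ℤ)) :
    ∃ j, (∀ e ∈ C.X i, C.M j {e} = 1) ∧ ∀ i' (hbig' : C.t i' < ((C.X i').card : ℤ)),
      (C.X i ∩ C.X i').Nonempty → C.bigColor i' hbig' ≠ j := by
  obtain ⟨e, he⟩ := card_eq_one.1 (C.card_eq_one_of_not_lt h).1
  set B := univ.filter fun i' => e ∈ C.X i' ∧ C.t i' < ((C.X i').card : ℤ)
  have hB : B.card < hypW C.X e := card_lt_card ⟨fun i' hi' => by simp_all [B],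
    fun hsub => by
      have hi := hsub (show i ∈ univ.filter (e ∈ C.X ·) by simp [he])
      simp only [B, mem_filter, mem_univ, true_and] at hi
      exact h hi.2⟩
  obtain ⟨j, hj, hjB⟩ := exists_mem_notMem_of_card_lt_card (t := univ.filter fun j => C.M j {e} = 1)
    (s := B.attach.image fun i' : {i' // i' ∈ B} => C.bigColor i'.1 (mem_filter.1 i'.2).2.2) (by
      rw [C.card_filter_rank_singleton_eq_one (C.X_subset i (he ▸ mem_singleton_self e))]
      exact (card_image_le.trans card_attach.le).trans_lt hB)
  refine ⟨j, fun a ha => by simp_all, fun i' hbig' hne hcol => hjB ?_⟩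
  obtain ⟨x, hx⟩ := hne
  rw [he, mem_inter, mem_singleton] at hx
  obtain ⟨rfl, hx⟩ := hx
  exact mem_image.2 ⟨⟨i', by simp [B, hx, hbig']⟩, mem_attach _ _, hcol⟩

noncomputable def color (i : Fin C.n) : Fin C.k :=
  if h : C.t i < ((C.X i).card : ℤ) then C.bigColor i h else (C.exists_smallColor h).choose

theorem color_of_lt (h : C.t i < ((C.X i).card : ℤ)) : C.color i = C.bigColor i h := dif_pos h

theorem rank_singleton_color (he : e ∈ C.X i) : C.M (C.color i) {e} = 1 := by
  unfold color
  split_ifs with h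
  · exact C.rank_singleton_bigColor h he
  · exact (C.exists_smallColor h).choose_spec.1 e he

theorem color_ne (hii' : i ≠ i') (he : e ∈ C.X i) (he' : e ∈ C.X i') :
    C.color i ≠ C.color i' := by
  have hne : (C.X i ∩ C.X i').Nonempty := ⟨e, mem_inter.2 ⟨he, he'⟩⟩
  unfold color
  split_ifs with h h' h'
  · exact C.bigColor_ne hii' he he' h h'
  · exact (C.exists_smallColor h').choose_spec.2 i h (inter_comm (C.X i) _ ▸ hne)
  · exact ((C.exists_smallColor h).choose_spec.2 i' h' hne).symm
  · obtain ⟨x, hx⟩ := card_eq_one.1 (C.card_eq_one_of_not_lt h).1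
    obtain ⟨x', hx'⟩ := card_eq_one.1 (C.card_eq_one_of_not_lt h').1
    rw [hx, mem_singleton] at he
    rw [hx', mem_singleton] at he'
    exact absurd (C.X_injective (hx.trans (he ▸ he' ▸ hx'.symm))) hii'

/-- The hyperedges through `e` have pairwise distinct colours in which `e` is a non-loop, and
there are exactly `w(e)` such colours. -/
theorem exists_color_eq (he : e ∈ C.E) (hj : C.M j {e} = 1) : ∃ i, e ∈ C.X i ∧ C.color i = j := by
  obtain ⟨i, hi, hij⟩ := surj_on_of_inj_on_of_card_le (s := univ.filter (e ∈ C.X ·))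
    (t := univ.filter fun j => C.M j {e} = 1) (fun i _ => C.color i)
    (fun i hi => by simpa using C.rank_singleton_color (mem_filter.1 hi).2)
    (fun i i' hi hi' h => by
      by_contra hii'
      exact C.color_ne hii' (mem_filter.1 hi).2 (mem_filter.1 hi').2 h)
    (C.card_filter_rank_singleton_eq_one he).le j (by simpa using hj)
  exact ⟨i, (mem_filter.1 hi).2, hij.symm⟩

theorem sum_rank_singleton_le_colorRank (j : Fin C.k) (hA : A ⊆ C.E)
    (h : ∀ i, C.color i = j → ((A ∩ C.X i).card : ℤ) ≤ C.t i) :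
    ∑ e ∈ A, C.M j {e} ≤ colorRank C.X C.t C.color j A := by
  classical
  calc ∑ e ∈ A, C.M j {e} = ((A.filter fun e => C.M j {e} = 1).card : ℤ) := by
        rw [card_filter, Nat.cast_sum]
        refine sum_congr rfl fun e he => ?_
        rcases (C.isMatroidRankOn j).singleton_eq_zero_or_one (hA he) with h | h <;> simp [h]
    _ ≤ (((univ.filter (C.color · = j)).biUnion (A ∩ C.X ·)).card : ℤ) := by
        refine Nat.cast_le.2 (card_le_card fun e he => ?_)
        obtain ⟨heA, hej⟩ := mem_filter.1 he
        obtain ⟨i, hei, hij⟩ := C.exists_color_eq (hA heA) hej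
        exact mem_biUnion.2 ⟨i, by simpa using hij, mem_inter.2 ⟨heA, hei⟩⟩
    _ ≤ ∑ i ∈ univ.filter (C.color · = j), ((A ∩ C.X i).card : ℤ) := mod_cast card_biUnion_le
    _ = colorRank C.X C.t C.color j A :=
        sum_congr rfl fun i hi => (min_eq_left (h i (mem_filter.1 hi).2)).symm

/-- If a hyperedge `X i` of colour `j` meets `A` in more than `t i` points, any one of these
points is spanned by `t i` others; otherwise the bound is subadditivity. -/
theorem rank_le_colorRank (j : Fin C.k) (hA : A ⊆ C.E) :
    C.M j A ≤ colorRank C.X C.t C.color j A := by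
  have hr := C.isMatroidRankOn j
  induction A using Finset.strongInduction with
  | H A ih =>
  by_cases h : ∃ i, C.color i = j ∧ C.t i + 1 ≤ ((A ∩ C.X i).card : ℤ)
  · obtain ⟨i, hij, hc⟩ := h
    have := C.one_le_t i
    obtain ⟨S, hS, hSc⟩ := exists_subset_card_eq (show (C.t i).toNat + 1 ≤ (A ∩ C.X i).card by
      omega)
    have hSX := hS.trans inter_subset_right
    have hbig : C.t i < ((C.X i).card : ℤ) := by
      have := card_le_card (inter_subset_right (s₁ := A) (s₂ := C.X i)); omega
    obtain ⟨e, heS⟩ : S.Nonempty := card_pos.1 (by omega)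
    rw [C.color_of_lt hbig] at hij
    subst hij
    have hSe : C.M (C.bigColor i hbig) (S.erase e) = C.M (C.bigColor i hbig) S := by
      rw [C.rank_bigColor hbig hSX, C.rank_bigColor hbig ((erase_subset e S).trans hSX),
        card_erase_of_mem heS, hSc]
      omega
    rw [← hr.rank_erase_eq hA (hS.trans inter_subset_left) heS hSe]
    exact (ih _ (erase_ssubset (hS.trans inter_subset_left heS))
      ((erase_subset e A).trans hA)).trans (colorRank_mono _ _ (erase_subset e A))
  · push Not at h
    exact (hr.rank_le_sum_singleton hA).trans
      (C.sum_rank_singleton_le_colorRank j hA fun i hi => by have := h i hi; omega)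

theorem rank_eq_colorRank (j : Fin C.k) (hA : A ⊆ C.E) :
    C.M j A = colorRank C.X C.t C.color j A :=
  (sum_eq_sum_iff_of_le fun j _ => C.rank_le_colorRank j hA).1
    (by rw [sum_colorRank, C.hypRho_eq_sum A hA]) j (mem_univ j)

end Decomposition

theorem kDecomposable_iff_nonempty_Delta [DecidableEq α] {k : ℕ} {E : Finset α}
    {ρ : Finset α → ℤ} : KDecomposable k E ρ ↔ (Delta k E ρ).Nonempty := by
  refine ⟨fun ⟨M, hM, hsum⟩ => ⟨fun j A => M j (A ∩ E), fun j => (hM j).comp_inter,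
    fun j A => by simp only [inter_assoc, inter_self], fun A hA => ?_⟩,
    fun ⟨M, hM, _, hsum⟩ => ⟨M, hM, hsum⟩⟩
  simp only [hsum A hA, inter_eq_left.2 hA]

theorem exists_colorRank_eq [DecidableEq α] {n k : ℕ} {E : Finset α} {X : Fin n → Finset α}
    {t : Fin n → ℤ} (hXsub : ∀ i, X i ⊆ E) (hXinj : Function.Injective X)
    (ht : ∀ i, t i ≤ ((X i).card : ℤ)) (hH2 : ∀ i j, i ≠ j → (X i ∩ X j).card ≤ 1)
    (hH3 : ¬ ∃ (a b c : α) (i j l : Fin n),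
      a ≠ b ∧ a ≠ c ∧ b ≠ c ∧ X i = {a, b} ∧ X j = {a, c} ∧ X l = {b, c})
    (hT : ∀ i, t i = 1 ∨ ((∃ e ∈ X i, (hypW X e : ℤ) ≤ t i) ∧ t i < ((X i).card : ℤ)))
    {M : Fin k → Finset α → ℤ} (hM : M ∈ Delta k E (hypRho X t)) :
    ∃ c, ProperColoring (lineGraph X) c ∧ colorRank X t c = M := by
  let C : Decomposition α := ⟨n, E, X, t, k, M, hXsub, hXinj, ht, hH2, hH3, hT, hM.1, hM.2.2⟩
  refine ⟨C.color, fun i i' ⟨hii', e, he⟩ => C.color_ne hii' (mem_inter.1 he).1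
    (mem_inter.1 he).2, funext fun j => funext fun A => ?_⟩
  rw [hM.2.1 j A, show M j (A ∩ E) = C.M j (A ∩ C.E) from rfl,
    C.rank_eq_colorRank j inter_subset_right]
  exact sum_congr rfl fun i _ => by rw [inter_assoc, inter_eq_right.2 (hXsub i)]

theorem stmt0_general [DecidableEq α] {n : ℕ} (E : Finset α)
    (X : Fin n → Finset α)
    (hXsub : ∀ i, X i ⊆ E)
    (hXinj : Function.Injective X)
    (t : Fin n → ℤ) (ht : ∀ i, 0 ≤ t i ∧ t i ≤ ((X i).card : ℤ))
    (hH2 : ∀ i j, i ≠ j → (X i ∩ X j).card ≤ 1)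
    (hH3 : ¬ ∃ (a b c : α) (i j l : Fin n),
      a ≠ b ∧ a ≠ c ∧ b ≠ c ∧ X i = {a, b} ∧ X j = {a, c} ∧ X l = {b, c})
    (hT : ∀ i, t i = 1 ∨
      ((∃ e ∈ X i, (hypW X e : ℤ) ≤ t i) ∧ t i < ((X i).card : ℤ))) :
    (∀ k : ℕ, 0 < k →
      Nonempty ({c : Fin n → Fin k // ProperColoring (lineGraph X) c} ≃
        ↥(Delta k E (hypRho X t)))) ∧
    (∀ m : ℕ,
      IsLeast {k : ℕ | 0 < k ∧ KDecomposable k E (hypRho X t)} m ↔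
      IsLeast {k : ℕ | 0 < k ∧
        ∃ c : Fin n → Fin k, ProperColoring (lineGraph X) c} m) ∧
    (∀ k : ℕ, 0 < k →
      (Delta k E (hypRho X t)).ncard =
        {c : Fin n → Fin k | ProperColoring (lineGraph X) c}.ncard) := by
  have ht1 (i : Fin n) : 1 ≤ t i := one_le_of_threshold (hT i)
  have ht0 (i : Fin n) : 0 ≤ t i := (ht i).1
  let equiv (k : ℕ) : {c : Fin n → Fin k // ProperColoring (lineGraph X) c} ≃
      Delta k E (hypRho X t) :=
    Equiv.ofBijective (fun c => ⟨colorRank X t c.1, colorRank_mem_Delta hXsub ht0 c.2⟩)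
      ⟨fun c c' h => Subtype.ext (eq_of_colorRank_eq hXinj ht1 (fun i => (ht i).2)
          (fun i => (hT i).imp_right And.right) hH2 c.2 c'.2 (congrArg Subtype.val h)),
        fun M => (exists_colorRank_eq hXsub hXinj (fun i => (ht i).2) hH2 hH3 hT M.2).elim
          fun c hc => ⟨⟨c, hc.1⟩, Subtype.ext hc.2⟩⟩
  have hdecomp (k : ℕ) : KDecomposable k E (hypRho X t) ↔
      ∃ c : Fin n → Fin k, ProperColoring (lineGraph X) c :=
    kDecomposable_iff_nonempty_Delta.trans ⟨fun ⟨M, hM⟩ => ⟨_, ((equiv k).symm ⟨M, hM⟩).2⟩,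
      fun ⟨c, hc⟩ => ⟨_, (equiv k ⟨c, hc⟩).2⟩⟩
  refine ⟨fun k _ => ⟨equiv k⟩, fun m => ?_, fun k _ => (Nat.card_congr (equiv k)).symm⟩
  simp only [hdecomp]

theorem stmt0 [DecidableEq α] {n : ℕ} (E : Finset α)
    (X : Fin n → Finset α)
    (hXsub : ∀ i, X i ⊆ E) (hXne : ∀ i, (X i).Nonempty)
    (hXinj : Function.Injective X)
    (t : Fin n → ℤ) (ht : ∀ i, 0 ≤ t i ∧ t i ≤ ((X i).card : ℤ))
    (hH2 : ∀ i j, i ≠ j → (X i ∩ X j).card ≤ 1)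
    (hH3 : ¬ ∃ (a b c : α) (i j l : Fin n),
      a ≠ b ∧ a ≠ c ∧ b ≠ c ∧ X i = {a, b} ∧ X j = {a, c} ∧ X l = {b, c})
    (hT : ∀ i, t i = 1 ∨
      ((∃ e ∈ X i, (hypW X e : ℤ) ≤ t i) ∧ t i < ((X i).card : ℤ))) :
    (∀ k : ℕ, 0 < k →
      Nonempty ({c : Fin n → Fin k // ProperColoring (lineGraph X) c} ≃
        ↥(Delta k E (hypRho X t)))) ∧
    (∀ m : ℕ,
      IsLeast {k : ℕ | 0 < k ∧ KDecomposable k E (hypRho X t)} m ↔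
      IsLeast {k : ℕ | 0 < k ∧
        ∃ c : Fin n → Fin k, ProperColoring (lineGraph X) c} m) ∧
    (∀ k : ℕ, 0 < k →
      (Delta k E (hypRho X t)).ncard =
        {c : Fin n → Fin k | ProperColoring (lineGraph X) c}.ncard) :=
  stmt0_general E X hXsub hXinj t ht hH2 hH3 hT
end

section
/- Let (M_1, …, M_k) be a k-tuple of matroids on E with ρ(X) = r_{M_1}(X)+⋯+r_{M_k}(X) for all X ⊆ E, and let X be an incidence set of the polymatroid ρ. Then there is exactly one index i ∈ {1,…,k} such that every two distinct elements of X are parallel in M_i, and for every j ≠ i no two distinct elements of X are parallel in M_j. If moreover ρ(X) = 1 + Σ_{e∈X}(ρ({e})−1), then for every j ≠ i the only circuits of M_j contained in X are single-element circuits (loops). -/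
/-!
Write `defect r A = ∑ e ∈ A, r {e} - r A`. For a polymatroid it is nonnegative, monotone and
supermodular; it is additive over `ρ = ∑ i, r_{M_i}`, and `X` is an incidence set exactly when
every `Y ⊆ X` with `1 ≤ |Y| ≤ 3` has `ρ`-defect `|Y| - 1`. In a matroid a pair has defect `1`
exactly when it is parallel. So the defect `1` of each pair of `X` sits in a single matroid,
and supermodularity on the triples of `X` (total defect `2`) forces the same matroid `M_i` for
all pairs. If moreover the `ρ`-defect of `X` is `|X| - 1`, the pairwise parallel class `X` already
has defect `|X| - 1` in `M_i`, so `X` has defect `0` in every other `M_j`, while a circuit with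
at least two elements has positive defect.
-/

variable {α : Type*}

/-- `e` and `f` are parallel elements of the matroid with rank function `r`:
distinct, neither is a loop, and `{e, f}` has rank one. -/
def ParallelIn [DecidableEq α] (r : Finset α → ℤ) (e f : α) : Prop :=
  e ≠ f ∧ r {e} = 1 ∧ r {f} = 1 ∧ r ({e, f} : Finset α) = 1

/-- `C` is a circuit of the matroid with rank function `r`: a minimal dependent set. -/
def IsCircuitOf [DecidableEq α] (r : Finset α → ℤ) (C : Finset α) : Prop :=
  C.Nonempty ∧ r C < (C.card : ℤ) ∧
    ∀ e ∈ C, r (C.erase e) = ((C.erase e).card : ℤ)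

section Defect

def defect (r : Finset α → ℤ) (A : Finset α) : ℤ := ∑ e ∈ A, r {e} - r A

@[simp]
theorem defect_singleton (r : Finset α → ℤ) (a : α) : defect r {a} = 0 := by
  simp [defect]

theorem defect_eq_card_sub_one_iff (r : Finset α → ℤ) (A : Finset α) :
    r A = 1 + ∑ e ∈ A, (r {e} - 1) ↔ defect r A = A.card - 1 := by
  rw [defect, Finset.sum_sub_distrib]
  simp only [Finset.sum_const, nsmul_eq_mul, mul_one]
  omega

theorem defect_eq_sum {ι : Type*} [Fintype ι] {E : Finset α} {ρ : Finset α → ℤ}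
    {M : ι → Finset α → ℤ} (hsum : ∀ A ⊆ E, ρ A = ∑ i, M i A) {A : Finset α} (hA : A ⊆ E) :
    defect ρ A = ∑ i, defect (M i) A := by
  have hsingle : ∑ e ∈ A, ρ {e} = ∑ i, ∑ e ∈ A, M i {e} := by
    rw [Finset.sum_comm]
    exact Finset.sum_congr rfl fun e he => hsum {e} (by simpa using hA he)
  simp only [defect]
  rw [hsum A hA, hsingle, Finset.sum_sub_distrib]

theorem eq_zero_of_sum_le_of_nonneg {ι : Type*} [Fintype ι] {s : ι → ℤ} (h0 : ∀ m, 0 ≤ s m)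
    {p m : ι} (hs : ∑ i, s i ≤ s p) (hm : m ≠ p) : s m = 0 := by
  have := Finset.add_le_sum (fun i _ => h0 i) (Finset.mem_univ p) (Finset.mem_univ m) hm.symm
  linarith [h0 m]

variable [DecidableEq α]

theorem defect_pair (r : Finset α → ℤ) {e f : α} (hef : e ≠ f) :
    defect r {e, f} = r {e} + r {f} - r {e, f} := by
  rw [defect, Finset.sum_pair hef]

section Polymatroid

variable {E : Finset α} {r : Finset α → ℤ}

theorem IsPolymatroidOn.defect_add_defect_le (h : IsPolymatroidOn E r) {A B : Finset α}
    (hA : A ⊆ E) (hB : B ⊆ E) :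
    defect r A + defect r B ≤ defect r (A ∪ B) + defect r (A ∩ B) := by
  have := h.2.2 A B hA hB
  have := Finset.sum_union_inter (s₁ := A) (s₂ := B) (f := fun e => r {e})
  simp only [defect]
  linarith

theorem IsPolymatroidOn.defect_empty (h : IsPolymatroidOn E r) : defect r ∅ = 0 := by
  simp [defect, h.1]

theorem IsPolymatroidOn.defect_nonneg (h : IsPolymatroidOn E r) {A : Finset α} (hA : A ⊆ E) :
    0 ≤ defect r A := by
  induction A using Finset.induction_on with
  | empty => exact h.defect_empty.ge
  | @insert a A ha ih =>
    have hA' := Finset.insert_subset_iff.mp hA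
    have := h.defect_add_defect_le (Finset.singleton_subset_iff.mpr hA'.1) hA'.2
    rw [Finset.singleton_inter_of_notMem ha, ← Finset.insert_eq, defect_singleton,
      h.defect_empty] at this
    linarith [ih hA'.2]

theorem IsPolymatroidOn.defect_mono (h : IsPolymatroidOn E r) {A B : Finset α} (hAB : A ⊆ B)
    (hB : B ⊆ E) : defect r A ≤ defect r B := by
  have := h.defect_add_defect_le (B := B \ A) (hAB.trans hB) (Finset.sdiff_subset.trans hB)
  rw [Finset.union_sdiff_of_subset hAB, Finset.inter_sdiff_self, h.defect_empty] at this
  linarith [h.defect_nonneg (A := B \ A) (Finset.sdiff_subset.trans hB)]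

theorem IsPolymatroidOn.defect_pair_add_defect_pair_le (h : IsPolymatroidOn E r) {e f g : α}
    (hT : {e, f, g} ⊆ E) (heg : e ≠ g) :
    defect r {e, f} + defect r {f, g} ≤ defect r {e, f, g} := by
  simp only [Finset.insert_subset_iff, Finset.singleton_subset_iff] at hT
  have := h.defect_add_defect_le (A := {e, f}) (B := {f, g})
    (by simp [Finset.insert_subset_iff, hT]) (by simp [Finset.insert_subset_iff, hT])
  have hunion : ({e, f} ∪ {f, g} : Finset α) = {e, f, g} := by ext; simp
  have hinter : ({e, f} ∩ {f, g} : Finset α) = {f} := by ext; simp; aesop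
  rw [hunion, hinter, defect_singleton] at this
  linarith

-- Adding `a` to a set containing `e₀` raises the defect by at least `defect r {e₀, a}`.
theorem IsPolymatroidOn.card_sub_one_le_defect (h : IsPolymatroidOn E r) {A : Finset α}
    (hA : A ⊆ E) (hpair : ∀ e ∈ A, ∀ f ∈ A, e ≠ f → 1 ≤ defect r {e, f}) :
    (A.card : ℤ) - 1 ≤ defect r A := by
  induction A using Finset.induction_on with
  | empty => simp [h.defect_empty]
  | @insert a A ha ih =>
    have hA' := Finset.insert_subset_iff.mp hA
    rw [Finset.card_insert_of_notMem ha]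
    obtain rfl | ⟨e₀, he₀⟩ := A.eq_empty_or_nonempty
    · simp
    have hpairE : ({e₀, a} : Finset α) ⊆ E := by
      simp [Finset.insert_subset_iff, hA'.1, hA'.2 he₀]
    have := h.defect_add_defect_le hA'.2 hpairE
    have hunion : A ∪ {e₀, a} = insert a A := by ext; simp; aesop
    have hinter : A ∩ {e₀, a} = {e₀} := by ext; simp; aesop
    rw [hunion, hinter, defect_singleton] at this
    have h₀ := hpair e₀ (Finset.mem_insert_of_mem he₀) a (Finset.mem_insert_self a A)
      (by rintro rfl; exact ha he₀)
    have := ih hA'.2 fun e he f hf => hpair e (Finset.mem_insert_of_mem he) f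
      (Finset.mem_insert_of_mem hf)
    push_cast
    linarith

end Polymatroid

section Matroid

variable {E : Finset α} {r : Finset α → ℤ}

theorem IsMatroidRankOn.rank_singleton_nonneg (h : IsMatroidRankOn E r) {e : α} (he : e ∈ E) :
    0 ≤ r {e} := by
  simpa [h.1.1] using h.1.2.1 ∅ {e} (Finset.empty_subset _) (Finset.singleton_subset_iff.mpr he)

theorem IsMatroidRankOn.defect_pair_eq_one_iff (h : IsMatroidRankOn E r) {e f : α} (he : e ∈ E)
    (hf : f ∈ E) (hef : e ≠ f) : defect r {e, f} = 1 ↔ ParallelIn r e f := by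
  have hpairE : ({e, f} : Finset α) ⊆ E := by simp [Finset.insert_subset_iff, he, hf]
  have := h.1.2.1 {e} {e, f} (by simp) hpairE
  have := h.1.2.1 {f} {e, f} (by simp) hpairE
  have := h.2 e he
  have := h.2 f hf
  have := h.rank_singleton_nonneg he
  have := h.rank_singleton_nonneg hf
  rw [defect_pair r hef]
  exact ⟨fun hd => ⟨hef, by omega, by omega, by omega⟩, fun ⟨_, _, _, _⟩ => by omega⟩

theorem IsMatroidRankOn.rank_singleton_eq_one_of_rank_eq_card (h : IsMatroidRankOn E r)
    {A : Finset α} (hA : A ⊆ E) (hr : r A = A.card) {e : α} (he : e ∈ A) : r {e} = 1 := by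
  have hle : ∀ x ∈ A, r {x} ≤ 1 := fun x hx => h.2 x (hA hx)
  have hsum : ∑ x ∈ A, r {x} = ∑ _x ∈ A, (1 : ℤ) := by
    refine le_antisymm (Finset.sum_le_sum hle) ?_
    have := h.1.defect_nonneg hA
    simp only [defect] at this
    simp only [Finset.sum_const, nsmul_eq_mul, mul_one]
    linarith
  exact (Finset.sum_eq_sum_iff_of_le hle).mp hsum e he

-- Proper subsets of a circuit are independent, so a circuit with two or more elements has no
-- loops and its defect is `|C| - r C > 0`.
theorem IsMatroidRankOn.defect_pos_of_isCircuitOf (h : IsMatroidRankOn E r) {C : Finset α}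
    (hCE : C ⊆ E) (hC : IsCircuitOf r C) (hC2 : 1 < C.card) : 0 < defect r C := by
  have hloopless : ∀ e ∈ C, r {e} = 1 := by
    intro e he
    obtain ⟨f, hf, hfe⟩ := Finset.exists_mem_ne hC2 e
    exact h.rank_singleton_eq_one_of_rank_eq_card ((Finset.erase_subset f C).trans hCE)
      (hC.2.2 f hf) (Finset.mem_erase.mpr ⟨hfe.symm, he⟩)
  have : ∑ e ∈ C, r {e} = C.card := by simp [Finset.sum_congr rfl hloopless]
  rw [defect, this]
  linarith [hC.2.1]

theorem IsMatroidRankOn.exists_eq_singleton_of_isCircuitOf (h : IsMatroidRankOn E r)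
    {C : Finset α} (hCE : C ⊆ E) (hC : IsCircuitOf r C) (hd : defect r C = 0) :
    ∃ e, C = {e} := by
  refine Finset.card_eq_one.mp (le_antisymm ?_ (Finset.card_pos.mpr hC.1))
  by_contra! hC2
  exact (h.defect_pos_of_isCircuitOf hCE hC hC2).ne' hd

end Matroid

section Incidence

variable {ι : Type*} [Fintype ι] {E : Finset α} {M : ι → Finset α → ℤ}

-- With `s i = defect (M i) {e, f, g} - defect (M i) {f, g}` we have `∑ s = 1` and
-- `s i ≥ defect (M i) {e, f}, defect (M i) {e, g} ≥ 0`, so `s` is concentrated at `p`.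
theorem defect_pair_eq_one_of_triple (hM : ∀ i, IsPolymatroidOn E (M i)) {e f g : α}
    (hT : {e, f, g} ⊆ E) (hef : e ≠ f) (heg : e ≠ g) (hfg₁ : ∑ i, defect (M i) {f, g} = 1)
    (heg₁ : ∑ i, defect (M i) {e, g} = 1) (hefg : ∑ i, defect (M i) {e, f, g} = 2) {p : ι}
    (hp : defect (M p) {e, f} = 1) : defect (M p) {e, g} = 1 := by
  set s : ι → ℤ := fun i => defect (M i) {e, f, g} - defect (M i) {f, g}
  have hTE : ({e, g, f} : Finset α) ⊆ E := by rwa [Finset.pair_comm]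
  have hs_ef : ∀ i, defect (M i) {e, f} ≤ s i := fun i => by
    linarith [(hM i).defect_pair_add_defect_pair_le hT heg]
  have hs_eg : ∀ i, defect (M i) {e, g} ≤ s i := fun i => by
    have := (hM i).defect_pair_add_defect_pair_le hTE hef
    rw [Finset.pair_comm g f] at this
    linarith
  have hsum : ∑ i, s i = 1 := by
    simp only [s, Finset.sum_sub_distrib, hefg, hfg₁]
    norm_num
  have hpairE : ({e, g} : Finset α) ⊆ E :=
    (Finset.insert_subset_insert e (Finset.subset_insert f {g})).trans hT
  have hs0 : ∀ i, 0 ≤ s i := fun i => ((hM i).defect_nonneg hpairE).trans (hs_eg i)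
  have hzero : ∀ i ≠ p, defect (M i) {e, g} = 0 := fun i hi =>
    le_antisymm ((hs_eg i).trans (eq_zero_of_sum_le_of_nonneg hs0 (by linarith [hs_ef p]) hi).le)
      ((hM i).defect_nonneg hpairE)
  rw [← heg₁, Finset.sum_eq_single p (fun i _ hi => hzero i hi) (by simp)]

theorem sum_defect_pair_of_incidence {X : Finset α}
    (hX : ∀ Y ⊆ X, 1 ≤ Y.card → Y.card ≤ 3 → ∑ i, defect (M i) Y = Y.card - 1)
    {e f : α} (he : e ∈ X) (hf : f ∈ X) (hef : e ≠ f) : ∑ i, defect (M i) {e, f} = 1 := by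
  have hcard := Finset.card_pair hef
  rw [hX {e, f} (by simp [Finset.insert_subset_iff, he, hf]) (by omega) (by omega), hcard]
  norm_num

theorem defect_pair_eq_one_of_incidence (hM : ∀ i, IsPolymatroidOn E (M i)) {X : Finset α}
    (hXE : X ⊆ E)
    (hX : ∀ Y ⊆ X, 1 ≤ Y.card → Y.card ≤ 3 → ∑ i, defect (M i) Y = Y.card - 1)
    {p : ι} {e₀ f₀ : α} (he₀ : e₀ ∈ X) (hf₀ : f₀ ∈ X) (hp : defect (M p) {e₀, f₀} = 1) :
    ∀ e ∈ X, ∀ f ∈ X, e ≠ f → defect (M p) {e, f} = 1 := by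
  have hpair := fun e (he : e ∈ X) f (hf : f ∈ X) hef => sum_defect_pair_of_incidence hX he hf hef
  have htriple : ∀ e ∈ X, ∀ f ∈ X, ∀ g ∈ X, e ≠ f → e ≠ g → f ≠ g →
      defect (M p) {e, f} = 1 → defect (M p) {e, g} = 1 := by
    intro e he f hf g hg hef heg hfg hefp
    have hTX : ({e, f, g} : Finset α) ⊆ X := by simp [Finset.insert_subset_iff, he, hf, hg]
    have hcard : ({e, f, g} : Finset α).card = 3 :=
      Finset.card_eq_three.mpr ⟨e, f, g, hef, heg, hfg, rfl⟩
    refine defect_pair_eq_one_of_triple hM (hTX.trans hXE) hef heg (hpair f hf g hg hfg)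
      (hpair e he g hg heg) ?_ hefp
    rw [hX _ hTX (by omega) (by omega), hcard]
    norm_num
  have hne : e₀ ≠ f₀ := by rintro rfl; simp at hp
  have hfrom₀ : ∀ g ∈ X, g ≠ e₀ → defect (M p) {e₀, g} = 1 := by
    intro g hg hge
    obtain rfl | hgf := eq_or_ne g f₀
    · exact hp
    · exact htriple e₀ he₀ f₀ hf₀ g hg hne hge.symm hgf.symm hp
  intro e he f hf hef
  obtain rfl | he' := eq_or_ne e e₀
  · exact hfrom₀ f hf hef.symm
  obtain rfl | hf' := eq_or_ne f e₀
  · rw [Finset.pair_comm]; exact hfrom₀ e he hef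
  have he₀e : defect (M p) {e, e₀} = 1 := by rw [Finset.pair_comm]; exact hfrom₀ e he he'
  exact htriple e he e₀ he₀ f hf he' hef hf'.symm he₀e

theorem exists_defect_pair_eq_one_of_incidence (hM : ∀ i, IsPolymatroidOn E (M i))
    {X : Finset α} (hXE : X ⊆ E) (hX2 : 1 < X.card)
    (hX : ∀ Y ⊆ X, 1 ≤ Y.card → Y.card ≤ 3 → ∑ i, defect (M i) Y = Y.card - 1) :
    ∃ p, ∀ e ∈ X, ∀ f ∈ X, e ≠ f →
      defect (M p) {e, f} = 1 ∧ ∀ j ≠ p, defect (M j) {e, f} = 0 := by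
  have hpair := fun e (he : e ∈ X) f (hf : f ∈ X) hef => sum_defect_pair_of_incidence hX he hf hef
  have hnonneg : ∀ j, ∀ e ∈ X, ∀ f ∈ X, 0 ≤ defect (M j) {e, f} := fun j e he f hf =>
    (hM j).defect_nonneg (by simp [Finset.insert_subset_iff, hXE he, hXE hf])
  obtain ⟨e₀, he₀, f₀, hf₀, hne⟩ := Finset.one_lt_card.mp hX2
  obtain ⟨p, -, hp⟩ := Finset.exists_lt_of_sum_lt (f := 0) (s := Finset.univ)
    (g := fun i => defect (M i) {e₀, f₀}) (by simp [hpair e₀ he₀ f₀ hf₀ hne])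
  have hp₁ : defect (M p) {e₀, f₀} = 1 := by
    refine le_antisymm ?_ hp
    rw [← hpair e₀ he₀ f₀ hf₀ hne]
    exact Finset.single_le_sum (fun j _ => hnonneg j e₀ he₀ f₀ hf₀) (Finset.mem_univ p)
  have hall := defect_pair_eq_one_of_incidence hM hXE hX he₀ hf₀ hp₁
  refine ⟨p, fun e he f hf hef => ⟨hall e he f hf hef, fun j hj => ?_⟩⟩
  exact eq_zero_of_sum_le_of_nonneg (fun m => hnonneg m e he f hf)
    (by rw [hpair e he f hf hef, hall e he f hf hef]) hj

end Incidence

end Defect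

theorem stmt1 [DecidableEq α] {k : ℕ} (E : Finset α) (ρ : Finset α → ℤ)
    (M : Fin k → Finset α → ℤ)
    (hM : ∀ i, IsMatroidRankOn E (M i))
    (hsum : ∀ A ⊆ E, ρ A = ∑ i, M i A)
    (X : Finset α) (hXE : X ⊆ E) (hX2 : 2 ≤ X.card)
    (hinc : ∀ Y ⊆ X, 1 ≤ Y.card → Y.card ≤ 3 →
      ρ Y = 1 + ∑ e ∈ Y, (ρ {e} - 1)) :
    ∃ i : Fin k,
      (∀ e ∈ X, ∀ f ∈ X, e ≠ f → ParallelIn (M i) e f) ∧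
      (∀ j, j ≠ i → ∀ e ∈ X, ∀ f ∈ X, e ≠ f → ¬ ParallelIn (M j) e f) ∧
      ((ρ X = 1 + ∑ e ∈ X, (ρ {e} - 1)) →
        ∀ j, j ≠ i → ∀ C ⊆ X, IsCircuitOf (M j) C → ∃ e, C = {e}) := by
  have hP : ∀ i, IsPolymatroidOn E (M i) := fun i => (hM i).1
  have hdefect : ∀ Y ⊆ X, ρ Y = 1 + ∑ e ∈ Y, (ρ {e} - 1) →
      ∑ i, defect (M i) Y = Y.card - 1 := fun Y hY h => by
    rw [← defect_eq_sum hsum (hY.trans hXE), ← defect_eq_card_sub_one_iff]; exact h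
  have hsmall := fun Y hY h₁ h₃ => hdefect Y hY (hinc Y hY h₁ h₃)
  obtain ⟨i, hi⟩ := exists_defect_pair_eq_one_of_incidence hP hXE hX2 hsmall
  refine ⟨i, fun e he f hf hef => ?_, fun j hj e he f hf hef hpar => ?_,
    fun hXinc j hj C hCX hC => ?_⟩
  · exact ((hM i).defect_pair_eq_one_iff (hXE he) (hXE hf) hef).mp (hi e he f hf hef).1
  · have := ((hM j).defect_pair_eq_one_iff (hXE he) (hXE hf) hef).mpr hpar
    rw [(hi e he f hf hef).2 j hj] at this
    exact zero_ne_one this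
  · have hiX : (X.card : ℤ) - 1 ≤ defect (M i) X :=
      (hP i).card_sub_one_le_defect hXE fun e he f hf hef => (hi e he f hf hef).1.ge
    have hjX : defect (M j) X = 0 := eq_zero_of_sum_le_of_nonneg
      (fun m => (hP m).defect_nonneg hXE) (by rw [hdefect X subset_rfl hXinc]; exact hiX) hj
    have hjC : defect (M j) C = 0 :=
      le_antisymm (hjX ▸ (hP j).defect_mono hCX hXE) ((hP j).defect_nonneg (hCX.trans hXE))
    exact (hM j).exists_eq_singleton_of_isCircuitOf (hCX.trans hXE) hC hjC
end

section
/- Let (M_1, …, M_k) be a k-tuple of matroids on E with ρ(X) = r_{M_1}(X)+⋯+r_{M_k}(X) for all X ⊆ E. Let X and Y be incidence sets of ρ, and suppose there are elements a ∈ X and b ∈ Y with ρ({a,b}) = ρ({a}) + ρ({b}). If X ∩ Y ≠ ∅, then |X ∩ Y| = 1, and the unique index i ∈ {1,…,k} such that every two distinct elements of X are parallel in M_i is different from the unique index j ∈ {1,…,k} such that every two distinct elements of Y are parallel in M_j. -/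
/-!
Write `δ_r(e, f) = r {e} + r {f} - r {e, f}` for the pair deficit of a rank function. Deficits add
up along a decomposition, and in a matroid `δ ∈ {0, 1}`, with `δ = 1` exactly on parallel pairs.
In an incidence set every pair has total deficit `1`, so it is parallel in some `M i`; moreover
submodularity bounds `δ(e, f) + δ(e, g)` by the triple deficit of `{e, f, g}`, and summing over
`i` shows these bounds are tight, which forces `δ_i(e, f) = δ_i(e, g)`.

The hypothesis on `a, b` says `δ_i(a, b) = 0` for every `i`, so by transitivity of parallelism no
`M i` has an element parallel to both `a` and `b`. A common element of `X` and `Y` would be one if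
both sets were parallel classes of the same `M i`; two common elements `u, v` are parallel in some
`M i`, and then both `a` and `b` are parallel to `u` there.
-/

variable {α : Type*}

/-- `X` is an incidence set of the polymatroid `ρ`. -/
def IsIncidenceSet [DecidableEq α] (ρ : Finset α → ℤ) (X : Finset α) : Prop :=
  2 ≤ X.card ∧
  ∀ Y ⊆ X, 1 ≤ Y.card → Y.card ≤ 3 → ρ Y = 1 + ∑ e ∈ Y, (ρ {e} - 1)

section

variable [DecidableEq α] {ι : Type*} [Fintype ι] {E X : Finset α} {ρ r : Finset α → ℤ}
  {M : ι → Finset α → ℤ} {a b c e f g : α}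

def pairDeficit (r : Finset α → ℤ) (e f : α) : ℤ := r {e} + r {f} - r {e, f}

def tripleDeficit (r : Finset α → ℤ) (e f g : α) : ℤ := r {e} + r {f} + r {g} - r {e, f, g}

theorem pairDeficit_comm (r : Finset α → ℤ) (e f : α) :
    pairDeficit r e f = pairDeficit r f e := by
  rw [pairDeficit, pairDeficit, Finset.pair_comm]
  ring

theorem tripleDeficit_swap_left (r : Finset α → ℤ) (e f g : α) :
    tripleDeficit r e f g = tripleDeficit r f e g := by
  rw [tripleDeficit, tripleDeficit, Finset.insert_comm]
  ring

theorem tripleDeficit_swap_right (r : Finset α → ℤ) (e f g : α) :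
    tripleDeficit r e f g = tripleDeficit r e g f := by
  rw [tripleDeficit, tripleDeficit, Finset.pair_comm]
  ring

namespace IsPolymatroidOn

theorem mono (h : IsPolymatroidOn E ρ) {A B : Finset α} (hAB : A ⊆ B) (hB : B ⊆ E) :
    ρ A ≤ ρ B :=
  h.2.1 A B hAB hB

theorem add_le_add_of_subset_union_of_subset_inter (h : IsPolymatroidOn E ρ)
    {A B C D : Finset α} (hA : A ⊆ E) (hB : B ⊆ E) (hC : C ⊆ A ∪ B) (hD : D ⊆ A ∩ B) :
    ρ C + ρ D ≤ ρ A + ρ B := by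
  have hCAB := h.mono hC (Finset.union_subset hA hB)
  have hDAB := h.mono hD (Finset.inter_subset_left.trans hA)
  linarith [h.2.2 A B hA hB]

theorem pairDeficit_nonneg (h : IsPolymatroidOn E ρ) (he : e ∈ E) (hf : f ∈ E) :
    0 ≤ pairDeficit ρ e f := by
  have := h.add_le_add_of_subset_union_of_subset_inter (A := {e}) (B := {f}) (C := {e, f})
    (D := ∅) (by simp [he]) (by simp [hf]) (Finset.insert_eq e {f}).subset (Finset.empty_subset _)
  rw [h.1] at this
  unfold pairDeficit
  linarith

theorem pairDeficit_le (h : IsPolymatroidOn E ρ) (he : e ∈ E) (hf : f ∈ E) :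
    pairDeficit ρ e f ≤ ρ {e} := by
  have := h.mono (A := {f}) (B := {e, f}) (by simp) (by simp [Finset.insert_subset_iff, he, hf])
  unfold pairDeficit
  linarith

theorem pairDeficit_add_pairDeficit_le_tripleDeficit (h : IsPolymatroidOn E ρ)
    (he : e ∈ E) (hf : f ∈ E) (hg : g ∈ E) :
    pairDeficit ρ e f + pairDeficit ρ e g ≤ tripleDeficit ρ e f g := by
  have := h.add_le_add_of_subset_union_of_subset_inter (A := {e, f}) (B := {e, g})
    (C := {e, f, g}) (D := {e}) (by simp [Finset.insert_subset_iff, he, hf])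
    (by simp [Finset.insert_subset_iff, he, hg])
    (by intro x; simp only [Finset.mem_union, Finset.mem_insert, Finset.mem_singleton]; tauto)
    (by simp)
  unfold pairDeficit tripleDeficit
  linarith

end IsPolymatroidOn

theorem ParallelIn.symm {r : Finset α → ℤ} (h : ParallelIn r e f) : ParallelIn r f e :=
  ⟨h.1.symm, h.2.2.1, h.2.1, Finset.pair_comm e f ▸ h.2.2.2⟩

namespace IsMatroidRankOn

theorem parallelIn_iff_pairDeficit_eq_one (hr : IsMatroidRankOn E r) (he : e ∈ E)
    (hf : f ∈ E) (hne : e ≠ f) : ParallelIn r e f ↔ pairDeficit r e f = 1 := by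
  unfold ParallelIn pairDeficit
  have hefE : ({e, f} : Finset α) ⊆ E := by simp [Finset.insert_subset_iff, he, hf]
  have hle : r {e} ≤ r {e, f} := hr.1.mono (by simp) hefE
  have hfe : r {f} ≤ r {e, f} := hr.1.mono (by simp) hefE
  have := hr.2 e he
  have := hr.2 f hf
  constructor
  · rintro ⟨-, h1, h2, h3⟩
    linarith
  · intro h
    exact ⟨hne, by linarith, by linarith, by linarith⟩

theorem parallelIn_trans (hr : IsMatroidRankOn E r) (ha : a ∈ E) (hb : b ∈ E)
    (hc : c ∈ E) (hac : ParallelIn r a c) (hcb : ParallelIn r c b) (hab : a ≠ b) :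
    ParallelIn r a b := by
  have hsub := hr.1.add_le_add_of_subset_union_of_subset_inter (A := {a, c}) (B := {c, b})
    (C := {a, b}) (D := {c}) (by simp [Finset.insert_subset_iff, ha, hc])
    (by simp [Finset.insert_subset_iff, hb, hc])
    (by intro x; simp only [Finset.mem_union, Finset.mem_insert, Finset.mem_singleton]; tauto)
    (by simp)
  have hmono : r {a} ≤ r {a, b} :=
    hr.1.mono (by simp) (by simp [Finset.insert_subset_iff, ha, hb])
  rw [hac.2.2.2, hcb.2.2.2, hcb.2.1] at hsub
  exact ⟨hab, hac.2.1, hcb.2.2.1, by linarith [hac.2.1]⟩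

theorem not_parallelIn_of_pairDeficit_eq_zero (hr : IsMatroidRankOn E r) (ha : a ∈ E)
    (hb : b ∈ E) (hc : c ∈ E) (hab : a ≠ b) (h : pairDeficit r a b = 0)
    (hac : ParallelIn r a c) : ¬ParallelIn r c b := fun hcb => by
  have := (hr.parallelIn_iff_pairDeficit_eq_one ha hb hab).1
    (hr.parallelIn_trans ha hb hc hac hcb hab)
  omega

end IsMatroidRankOn

theorem pairDeficit_eq_sum (hsum : ∀ A ⊆ E, ρ A = ∑ i, M i A) (he : e ∈ E)
    (hf : f ∈ E) : pairDeficit ρ e f = ∑ i, pairDeficit (M i) e f := by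
  simp only [pairDeficit, Finset.sum_sub_distrib, Finset.sum_add_distrib]
  rw [hsum _ (by simp [he]), hsum _ (by simp [hf]),
    hsum _ (by simp [Finset.insert_subset_iff, he, hf])]

theorem tripleDeficit_eq_sum (hsum : ∀ A ⊆ E, ρ A = ∑ i, M i A) (he : e ∈ E)
    (hf : f ∈ E) (hg : g ∈ E) : tripleDeficit ρ e f g = ∑ i, tripleDeficit (M i) e f g := by
  simp only [tripleDeficit, Finset.sum_sub_distrib, Finset.sum_add_distrib]
  rw [hsum _ (by simp [he]), hsum _ (by simp [hf]), hsum _ (by simp [hg]),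
    hsum _ (by simp [Finset.insert_subset_iff, he, hf, hg])]

theorem pairDeficit_eq_zero_of_sum (hM : ∀ i, IsPolymatroidOn E (M i))
    (hsum : ∀ A ⊆ E, ρ A = ∑ i, M i A) (he : e ∈ E) (hf : f ∈ E)
    (h : pairDeficit ρ e f = 0) (i : ι) : pairDeficit (M i) e f = 0 := by
  rw [pairDeficit_eq_sum hsum he hf] at h
  exact (Finset.sum_eq_zero_iff_of_nonneg fun j _ => (hM j).pairDeficit_nonneg he hf).1 h i
    (Finset.mem_univ i)

theorem IsPolymatroidOn.of_sum (hM : ∀ i, IsPolymatroidOn E (M i))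
    (hsum : ∀ A ⊆ E, ρ A = ∑ i, M i A) : IsPolymatroidOn E ρ := by
  refine ⟨?_, fun A B hAB hB => ?_, fun A B hA hB => ?_⟩
  · simp [hsum ∅ (Finset.empty_subset E), fun i => (hM i).1]
  · rw [hsum A (hAB.trans hB), hsum B hB]
    exact Finset.sum_le_sum fun i _ => (hM i).2.1 A B hAB hB
  · rw [hsum _ (Finset.union_subset hA hB), hsum _ (Finset.inter_subset_left.trans hA),
      hsum A hA, hsum B hB, ← Finset.sum_add_distrib, ← Finset.sum_add_distrib]
    exact Finset.sum_le_sum fun i _ => (hM i).2.2 A B hA hB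

namespace IsIncidenceSet

theorem pairDeficit_eq_one (hX : IsIncidenceSet ρ X) (he : e ∈ X) (hf : f ∈ X)
    (hne : e ≠ f) : pairDeficit ρ e f = 1 := by
  have hcard := Finset.card_pair hne
  have := hX.2 {e, f} (by simp [Finset.insert_subset_iff, he, hf]) (by omega) (by omega)
  rw [Finset.sum_pair hne] at this
  unfold pairDeficit
  linarith

theorem tripleDeficit_eq_two (hX : IsIncidenceSet ρ X) (he : e ∈ X) (hf : f ∈ X)
    (hg : g ∈ X) (hef : e ≠ f) (heg : e ≠ g) (hfg : f ≠ g) :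
    tripleDeficit ρ e f g = 2 := by
  have hnotin : e ∉ ({f, g} : Finset α) := by simp [hef, heg]
  have hcard : ({e, f, g} : Finset α).card = 3 := by
    rw [Finset.card_insert_of_notMem hnotin, Finset.card_pair hfg]
  have := hX.2 {e, f, g} (by simp [Finset.insert_subset_iff, he, hf, hg]) (by omega) (by omega)
  rw [Finset.sum_insert hnotin, Finset.sum_pair hfg] at this
  unfold tripleDeficit
  linarith

theorem one_le_of_mem (hρ : IsPolymatroidOn E ρ) (hXE : X ⊆ E)
    (hX : IsIncidenceSet ρ X) (he : e ∈ X) : 1 ≤ ρ {e} := by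
  obtain ⟨f, hf, hfe⟩ := Finset.exists_mem_ne (s := X) (by have := hX.1; omega) e
  rw [← hX.pairDeficit_eq_one he hf hfe.symm]
  exact hρ.pairDeficit_le (hXE he) (hXE hf)

theorem ne_of_pairDeficit_eq_zero (hρ : IsPolymatroidOn E ρ) (hXE : X ⊆ E)
    (hX : IsIncidenceSet ρ X) (ha : a ∈ X) (h : pairDeficit ρ a b = 0) : a ≠ b := by
  rintro rfl
  rw [pairDeficit, Finset.pair_eq_singleton] at h
  linarith [hX.one_le_of_mem hρ hXE ha]

theorem notMem_of_pairDeficit_eq_zero (hX : IsIncidenceSet ρ X) (hb : b ∈ X) (hab : a ≠ b)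
    (h : pairDeficit ρ a b = 0) : a ∉ X := fun ha => by
  rw [hX.pairDeficit_eq_one ha hb hab] at h
  omega

theorem exists_parallelIn (hM : ∀ i, IsMatroidRankOn E (M i))
    (hsum : ∀ A ⊆ E, ρ A = ∑ i, M i A) (hXE : X ⊆ E) (hX : IsIncidenceSet ρ X)
    (he : e ∈ X) (hf : f ∈ X) (hne : e ≠ f) : ∃ i, ParallelIn (M i) e f := by
  have htotal : ∑ _i : ι, (0 : ℤ) < ∑ i, pairDeficit (M i) e f := by
    rw [← pairDeficit_eq_sum hsum (hXE he) (hXE hf), hX.pairDeficit_eq_one he hf hne]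
    simp
  obtain ⟨i, -, hpos⟩ := Finset.exists_lt_of_sum_lt htotal
  have hle := (hM i).1.pairDeficit_le (hXE he) (hXE hf)
  have hrank := (hM i).2 e (hXE he)
  exact ⟨i, ((hM i).parallelIn_iff_pairDeficit_eq_one (hXE he) (hXE hf) hne).2 (by omega)⟩

theorem pairDeficit_add_pairDeficit_eq_tripleDeficit (hM : ∀ i, IsPolymatroidOn E (M i))
    (hsum : ∀ A ⊆ E, ρ A = ∑ i, M i A) (hXE : X ⊆ E) (hX : IsIncidenceSet ρ X)
    (he : e ∈ X) (hf : f ∈ X) (hg : g ∈ X) (hef : e ≠ f) (heg : e ≠ g) (hfg : f ≠ g)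
    (i : ι) :
    pairDeficit (M i) e f + pairDeficit (M i) e g = tripleDeficit (M i) e f g := by
  have hle : ∀ j ∈ Finset.univ,
      pairDeficit (M j) e f + pairDeficit (M j) e g ≤ tripleDeficit (M j) e f g :=
    fun j _ => (hM j).pairDeficit_add_pairDeficit_le_tripleDeficit (hXE he) (hXE hf) (hXE hg)
  refine (Finset.sum_eq_sum_iff_of_le hle).1 ?_ i (Finset.mem_univ i)
  rw [Finset.sum_add_distrib, ← pairDeficit_eq_sum hsum (hXE he) (hXE hf),
    ← pairDeficit_eq_sum hsum (hXE he) (hXE hg), ← tripleDeficit_eq_sum hsum (hXE he) (hXE hf)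
    (hXE hg), hX.pairDeficit_eq_one he hf hef, hX.pairDeficit_eq_one he hg heg,
    hX.tripleDeficit_eq_two he hf hg hef heg hfg]
  norm_num

theorem pairDeficit_eq_pairDeficit (hM : ∀ i, IsPolymatroidOn E (M i))
    (hsum : ∀ A ⊆ E, ρ A = ∑ i, M i A) (hXE : X ⊆ E) (hX : IsIncidenceSet ρ X)
    (he : e ∈ X) (hf : f ∈ X) (hg : g ∈ X) (hef : e ≠ f) (heg : e ≠ g) (hfg : f ≠ g)
    (i : ι) :
    pairDeficit (M i) e f = pairDeficit (M i) e g := by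
  have at_e := hX.pairDeficit_add_pairDeficit_eq_tripleDeficit hM hsum hXE he hf hg hef heg hfg i
  have at_f := hX.pairDeficit_add_pairDeficit_eq_tripleDeficit hM hsum hXE hf he hg hef.symm hfg
    heg i
  have at_g := hX.pairDeficit_add_pairDeficit_eq_tripleDeficit hM hsum hXE hg he hf heg.symm
    hfg.symm hef i
  have hT_f : tripleDeficit (M i) f e g = tripleDeficit (M i) e f g :=
    (tripleDeficit_swap_left _ e f g).symm
  have hT_g : tripleDeficit (M i) g e f = tripleDeficit (M i) e f g := by
    rw [tripleDeficit_swap_left, tripleDeficit_swap_right]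
  linarith [pairDeficit_comm (M i) f e, pairDeficit_comm (M i) g e, pairDeficit_comm (M i) g f]

theorem parallelIn_of_parallelIn (hM : ∀ i, IsMatroidRankOn E (M i))
    (hsum : ∀ A ⊆ E, ρ A = ∑ i, M i A) (hXE : X ⊆ E) (hX : IsIncidenceSet ρ X)
    (he : e ∈ X) (hf : f ∈ X) (hg : g ∈ X) (heg : e ≠ g) (hfg : f ≠ g) {i : ι}
    (hef : ParallelIn (M i) e f) : ParallelIn (M i) e g := by
  rw [(hM i).parallelIn_iff_pairDeficit_eq_one (hXE he) (hXE hg) heg,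
    ← hX.pairDeficit_eq_pairDeficit (fun i => (hM i).1) hsum hXE he hf hg hef.1 heg hfg i,
    ← (hM i).parallelIn_iff_pairDeficit_eq_one (hXE he) (hXE hf) hef.1]
  exact hef

end IsIncidenceSet

end

theorem stmt2 [DecidableEq α] {k : ℕ} (E : Finset α) (ρ : Finset α → ℤ)
    (M : Fin k → Finset α → ℤ)
    (hM : ∀ i, IsMatroidRankOn E (M i))
    (hsum : ∀ A ⊆ E, ρ A = ∑ i, M i A)
    (X Y : Finset α) (hXE : X ⊆ E) (hYE : Y ⊆ E)
    (hX : IsIncidenceSet ρ X) (hY : IsIncidenceSet ρ Y)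
    (a b : α) (ha : a ∈ X) (hb : b ∈ Y)
    (hab : ρ ({a, b} : Finset α) = ρ {a} + ρ {b})
    (hXY : (X ∩ Y).Nonempty) :
    (X ∩ Y).card = 1 ∧
    ∀ i j : Fin k,
      (∀ e ∈ X, ∀ f ∈ X, e ≠ f → ParallelIn (M i) e f) →
      (∀ e ∈ Y, ∀ f ∈ Y, e ≠ f → ParallelIn (M j) e f) →
      i ≠ j := by
  have hρ : IsPolymatroidOn E ρ := .of_sum (fun i => (hM i).1) hsum
  have haE := hXE ha
  have hbE := hYE hb
  have hab0 : pairDeficit ρ a b = 0 := by rw [pairDeficit, hab]; ring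
  have hab_ne := hX.ne_of_pairDeficit_eq_zero hρ hXE ha hab0
  have haY := hY.notMem_of_pairDeficit_eq_zero hb hab_ne hab0
  have hbX := hX.notMem_of_pairDeficit_eq_zero ha hab_ne.symm (by rwa [pairDeficit_comm])
  have no_common (i) (c) (hc : c ∈ E) : ParallelIn (M i) a c → ¬ParallelIn (M i) c b :=
    (hM i).not_parallelIn_of_pairDeficit_eq_zero haE hbE hc hab_ne
      (pairDeficit_eq_zero_of_sum (fun i => (hM i).1) hsum haE hbE hab0 i)
  refine ⟨le_antisymm (Finset.card_le_one.2 fun u hu v hv => ?_) hXY.card_pos, ?_⟩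
  · rw [Finset.mem_inter] at hu hv
    by_contra huv
    obtain ⟨i, huv_par⟩ := hX.exists_parallelIn hM hsum hXE hu.1 hv.1 huv
    have hau := hX.parallelIn_of_parallelIn hM hsum hXE hu.1 hv.1 ha
      (fun h => haY (h ▸ hu.2)) (fun h => haY (h ▸ hv.2)) huv_par
    have hub := hY.parallelIn_of_parallelIn hM hsum hYE hu.2 hv.2 hb
      (fun h => hbX (h ▸ hu.1)) (fun h => hbX (h ▸ hv.1)) huv_par
    exact no_common i u (hXE hu.1) hau.symm hub
  · rintro i j hi hj rfl
    obtain ⟨c, hc⟩ := hXY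
    obtain ⟨hcX, hcY⟩ := Finset.mem_inter.1 hc
    exact no_common i c (hXE hcX) (hi a ha c hcX fun h => haY (h ▸ hcY))
      (hj c hcY b hb fun h => hbX (h ▸ hcX))
end

section
/- Let H = (E, {X_1, …, X_n}) be a hypergraph satisfying property (H2) such that the line graph G_H is a complete graph on {1,…,n}, and such that whenever p and q are distinct elements of {1,…,n} there are elements a ∈ X_p and b ∈ X_q with no i ∈ {1,…,n} satisfying {a,b} ⊆ X_i. Let ρ be the polymatroid on E given by ρ(A) = Σ_{i=1}^n min(|A ∩ X_i|, 1). Let σ be any polymatroid on E with σ(A) = ρ(A) whenever (i) |A| ≤ 2, or (ii) |A| = 3 and A ⊆ X_i for some i. If σ(E) < n, then σ is not k-decomposable for any positive integer k. -/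
/-!
Let `excess ρ T = ∑_{t ∈ T} ρ {t} - ρ T`; it is additive in `ρ`. For `hypRho1 X`, hence for `σ`,
a pair has excess `1` inside a block and `0` if no block contains it, and three elements of a block
have excess `2`. In a matroid a pair has excess `0` or `1`, excess `1` meaning parallel non-loops.
Submodularity bounds the excess of a triple below by the excesses of two of its pairs; equality
holds for `σ = ∑ M_j` on a block, hence in every `M_j`. So each `M_j` has constant pair excess on
a block, and some `M_{φ p}` makes `X_p` a parallel class of non-loops. Two blocks share an element
but contain a separated pair, so transitivity of parallelism makes `φ` injective, and
`σ E = ∑_j M_j E ≥ n`.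
-/

variable {α : Type*}

/-- The polymatroid `ρ(A) = Σ_i min(|A ∩ X_i|, 1)` (all `t_i = 1`). -/
def hypRho1 [DecidableEq α] {n : ℕ} (X : Fin n → Finset α) : Finset α → ℤ :=
  fun A => ∑ i, min (((A ∩ X i).card : ℤ)) 1

open Finset Function

lemma eq_of_forall_distinct_triple {β : Type*} {S : Finset α} {f : α → α → β}
    (hf : ∀ a b, f a b = f b a)
    (h : ∀ a ∈ S, ∀ b ∈ S, ∀ c ∈ S, a ≠ b → a ≠ c → b ≠ c → f a b = f a c)
    {x y u v : α} (hx : x ∈ S) (hy : y ∈ S) (hxy : x ≠ y) (hu : u ∈ S) (hv : v ∈ S)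
    (huv : u ≠ v) : f x y = f u v := by
  have hcentre : ∀ a ∈ S, ∀ b ∈ S, ∀ c ∈ S, a ≠ b → a ≠ c → f a b = f a c := by
    intro a ha b hb c hc hab hac
    rcases eq_or_ne b c with rfl | hbc
    · rfl
    · exact h a ha b hb c hc hab hac hbc
  rcases eq_or_ne x u with rfl | hxu
  · exact hcentre x hx y hy v hv hxy huv
  calc f x y = f x u := hcentre x hx y hy u hu hxy hxu
    _ = f u x := hf x u
    _ = f u v := hcentre u hu x hx v hv hxu.symm huv

section Excess

variable {E T : Finset α} {ρ r : Finset α → ℤ} {a b c : α}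

def excess (ρ : Finset α → ℤ) (T : Finset α) : ℤ :=
  ∑ t ∈ T, ρ {t} - ρ T

lemma excess_congr {σ : Finset α → ℤ} (h : ∀ t ∈ T, σ {t} = ρ {t}) (hT : σ T = ρ T) :
    excess σ T = excess ρ T := by
  rw [excess, excess, sum_congr rfl h, hT]

variable [DecidableEq α]

lemma excess_pair (ρ : Finset α → ℤ) (hab : a ≠ b) :
    excess ρ {a, b} = ρ {a} + ρ {b} - ρ {a, b} := by
  rw [excess, sum_pair hab]

lemma excess_triple (ρ : Finset α → ℤ) (hab : a ≠ b) (hac : a ≠ c) (hbc : b ≠ c) :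
    excess ρ {a, b, c} = ρ {a} + ρ {b} + ρ {c} - ρ {a, b, c} := by
  rw [excess, sum_insert (by simp [hab, hac]), sum_pair hbc]
  ring

lemma pair_subset_of_mem (ha : a ∈ E) (hb : b ∈ E) : ({a, b} : Finset α) ⊆ E := by
  simp [insert_subset_iff, ha, hb]

lemma IsPolymatroidOn.nonneg (hρ : IsPolymatroidOn E ρ) (hT : T ⊆ E) : 0 ≤ ρ T :=
  hρ.1 ▸ hρ.2.1 ∅ T (empty_subset T) hT

lemma IsPolymatroidOn.excess_pair_nonneg (hρ : IsPolymatroidOn E ρ) (ha : a ∈ E) (hb : b ∈ E)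
    (hab : a ≠ b) : 0 ≤ excess ρ {a, b} := by
  have h := hρ.2.2 {a} {b} (singleton_subset_iff.2 ha) (singleton_subset_iff.2 hb)
  rw [singleton_inter_of_notMem (by simpa using hab), hρ.1] at h
  rw [excess_pair ρ hab]
  exact sub_nonneg.2 (by simpa using h)

lemma IsPolymatroidOn.excess_pair_add_excess_pair_le (hρ : IsPolymatroidOn E ρ) (ha : a ∈ E)
    (hb : b ∈ E) (hc : c ∈ E) (hab : a ≠ b) (hac : a ≠ c) (hbc : b ≠ c) :
    excess ρ {a, b} + excess ρ {a, c} ≤ excess ρ {a, b, c} := by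
  have h := hρ.2.2 {a, b} {a, c} (pair_subset_of_mem ha hb) (pair_subset_of_mem ha hc)
  rw [show ({a, b} ∪ {a, c} : Finset α) = {a, b, c} by ext; grind,
    show ({a, b} ∩ {a, c} : Finset α) = {a} by ext; grind] at h
  rw [excess_pair ρ hab, excess_pair ρ hac, excess_triple ρ hab hac hbc]
  linarith

lemma IsMatroidRankOn.excess_pair_le_one (hr : IsMatroidRankOn E r) (ha : a ∈ E) (hb : b ∈ E)
    (hab : a ≠ b) : excess r {a, b} ≤ 1 := by
  have h1 := hr.2 a ha
  have h2 := hr.1.2.1 {b} {a, b} (by simp) (pair_subset_of_mem ha hb)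
  rw [excess_pair r hab]
  linarith

lemma IsMatroidRankOn.rank_eq_one_of_excess_pair_eq_one (hr : IsMatroidRankOn E r) (ha : a ∈ E)
    (hb : b ∈ E) (hab : a ≠ b) (h : excess r {a, b} = 1) :
    r {a} = 1 ∧ r {b} = 1 ∧ r {a, b} = 1 := by
  have h1 := hr.2 a ha
  have h2 := hr.2 b hb
  have h3 := hr.1.2.1 {a} {a, b} (by simp) (pair_subset_of_mem ha hb)
  have h4 := hr.1.2.1 {b} {a, b} (by simp) (pair_subset_of_mem ha hb)
  rw [excess_pair r hab] at h
  refine ⟨?_, ?_, ?_⟩ <;> linarith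

lemma IsMatroidRankOn.one_le_of_excess_pair_eq_one (hr : IsMatroidRankOn E r) (ha : a ∈ E)
    (hb : b ∈ E) (hab : a ≠ b) (h : excess r {a, b} = 1) : 1 ≤ r E :=
  (hr.rank_eq_one_of_excess_pair_eq_one ha hb hab h).1 ▸
    hr.1.2.1 {a} E (singleton_subset_iff.2 ha) subset_rfl

/-- Being parallel is transitive among the non-loops of a matroid. -/
lemma IsMatroidRankOn.excess_pair_eq_one_trans (hr : IsMatroidRankOn E r) (ha : a ∈ E)
    (hb : b ∈ E) (hc : c ∈ E) (hab : a ≠ b) (hac : a ≠ c) (hbc : b ≠ c)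
    (hac1 : excess r {a, c} = 1) (hbc1 : excess r {b, c} = 1) : excess r {a, b} = 1 := by
  obtain ⟨ra, rc, rac⟩ := hr.rank_eq_one_of_excess_pair_eq_one ha hc hac hac1
  obtain ⟨rb, -, rbc⟩ := hr.rank_eq_one_of_excess_pair_eq_one hb hc hbc hbc1
  have hsub := hr.1.2.2 {a, c} {b, c} (pair_subset_of_mem ha hc) (pair_subset_of_mem hb hc)
  rw [show ({a, c} ∪ {b, c} : Finset α) = {a, b, c} by ext; grind,
    show ({a, c} ∩ {b, c} : Finset α) = {c} by ext; grind] at hsub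
  have hmono := hr.1.2.1 {a, b} {a, b, c} (by simp [insert_subset_iff])
    (by simp [insert_subset_iff, ha, hb, hc])
  have hle := hr.excess_pair_le_one ha hb hab
  rw [excess_pair r hab] at hle ⊢
  linarith

end Excess

section Decomposition

variable {k : ℕ} {E T : Finset α} {σ : Finset α → ℤ} {M : Fin k → Finset α → ℤ} {a b c : α}

lemma excess_eq_sum (hsum : ∀ X ⊆ E, σ X = ∑ j, M j X) (hT : T ⊆ E) :
    excess σ T = ∑ j, excess (M j) T := by
  simp only [excess, sum_sub_distrib]
  rw [sum_comm, ← hsum T hT]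
  congr 1
  exact sum_congr rfl fun t ht => hsum {t} (singleton_subset_iff.2 (hT ht))

variable [DecidableEq α]

lemma exists_excess_pair_eq_one (hM : ∀ j, IsMatroidRankOn E (M j))
    (hsum : ∀ X ⊆ E, σ X = ∑ j, M j X) (ha : a ∈ E) (hb : b ∈ E) (hab : a ≠ b)
    (h : excess σ {a, b} = 1) : ∃ j, excess (M j) {a, b} = 1 := by
  by_contra! hne
  have hnonpos : ∀ j ∈ univ, excess (M j) {a, b} ≤ 0 := fun j _ => by
    have := (hM j).excess_pair_le_one ha hb hab
    have := hne j
    omega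
  have := sum_nonpos hnonpos
  rw [← excess_eq_sum hsum (pair_subset_of_mem ha hb)] at this
  omega

lemma excess_pair_eq_zero (hM : ∀ j, IsPolymatroidOn E (M j))
    (hsum : ∀ X ⊆ E, σ X = ∑ j, M j X) (ha : a ∈ E) (hb : b ∈ E) (hab : a ≠ b)
    (h : excess σ {a, b} = 0) (j : Fin k) : excess (M j) {a, b} = 0 := by
  rw [excess_eq_sum hsum (pair_subset_of_mem ha hb)] at h
  exact (sum_eq_zero_iff_of_nonneg fun j _ => (hM j).excess_pair_nonneg ha hb hab).1 h j
    (mem_univ j)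

lemma excess_pair_add_excess_pair_eq_of_eq (hM : ∀ j, IsPolymatroidOn E (M j))
    (hsum : ∀ X ⊆ E, σ X = ∑ j, M j X) (ha : a ∈ E) (hb : b ∈ E) (hc : c ∈ E) (hab : a ≠ b)
    (hac : a ≠ c) (hbc : b ≠ c) (h : excess σ {a, b} + excess σ {a, c} = excess σ {a, b, c})
    (j : Fin k) : excess (M j) {a, b} + excess (M j) {a, c} = excess (M j) {a, b, c} := by
  rw [excess_eq_sum hsum (pair_subset_of_mem ha hb), excess_eq_sum hsum (pair_subset_of_mem ha hc),
    excess_eq_sum hsum (by simp [insert_subset_iff, ha, hb, hc]), ← sum_add_distrib] at h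
  exact (sum_eq_sum_iff_of_le fun j _ =>
    (hM j).excess_pair_add_excess_pair_le ha hb hc hab hac hbc).1 h j (mem_univ j)

lemma exists_excess_pair_eq_one_on (hM : ∀ j, IsMatroidRankOn E (M j))
    (hsum : ∀ X ⊆ E, σ X = ∑ j, M j X) {S : Finset α} (hS : S ⊆ E) (ha : a ∈ S) (hb : b ∈ S)
    (hab : a ≠ b) (hpair : ∀ x ∈ S, ∀ y ∈ S, x ≠ y → excess σ {x, y} = 1)
    (htriple : ∀ x ∈ S, ∀ y ∈ S, ∀ z ∈ S, x ≠ y → x ≠ z → y ≠ z → excess σ {x, y, z} = 2) :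
    ∃ j, ∀ x ∈ S, ∀ y ∈ S, x ≠ y → excess (M j) {x, y} = 1 := by
  obtain ⟨j, hj⟩ :=
    exists_excess_pair_eq_one hM hsum (hS ha) (hS hb) hab (hpair a ha b hb hab)
  have htight : ∀ x ∈ S, ∀ y ∈ S, ∀ z ∈ S, x ≠ y → x ≠ z → y ≠ z →
      excess (M j) {x, y} + excess (M j) {x, z} = excess (M j) {x, y, z} := by
    intro x hx y hy z hz hxy hxz hyz
    refine excess_pair_add_excess_pair_eq_of_eq (fun j => (hM j).1) hsum (hS hx) (hS hy) (hS hz)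
      hxy hxz hyz ?_ j
    rw [hpair x hx y hy hxy, hpair x hx z hz hxz, htriple x hx y hy z hz hxy hxz hyz]
    norm_num
  refine ⟨j, fun x hx y hy hxy => hj ▸ eq_of_forall_distinct_triple
    (f := fun x y => excess (M j) {x, y}) (fun x y => by rw [pair_comm]) ?_ hx hy hxy ha hb hab⟩
  intro x hx y hy z hz hxy hxz hyz
  -- the tight triple `{x, y, z}` read from the centres `y` and `z`
  have hy' := htight y hy x hx z hz hxy.symm hyz hxz
  have hz' := htight z hz x hx y hy hxz.symm hyz.symm hxy
  rw [pair_comm y x] at hy'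
  rw [pair_comm z x, pair_comm z y, show ({z, x, y} : Finset α) = {y, x, z} by
    ext; simp only [mem_insert, mem_singleton]; tauto] at hz'
  linarith

end Decomposition

lemma natCast_card_le_sum_of_injective {ι κ : Type*} [Fintype ι] [Fintype κ] {φ : ι → κ}
    (hφ : Injective φ) {f : κ → ℤ} (hf : ∀ j, 0 ≤ f j) (hφf : ∀ i, 1 ≤ f (φ i)) :
    (Fintype.card ι : ℤ) ≤ ∑ j, f j :=
  calc (Fintype.card ι : ℤ) = ∑ _i : ι, 1 := by simp
    _ ≤ ∑ i, f (φ i) := sum_le_sum fun i _ => hφf i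
    _ = ∑ j ∈ univ.map ⟨φ, hφ⟩, f j := (sum_map univ ⟨φ, hφ⟩ f).symm
    _ ≤ ∑ j, f j := sum_le_sum_of_subset_of_nonneg (subset_univ _) fun j _ _ => hf j

section Hypergraph

variable [DecidableEq α] {n k : ℕ} {X : Fin n → Finset α} {E S T : Finset α}
  {σ : Finset α → ℤ} {M : Fin k → Finset α → ℤ} {a b c : α}

lemma excess_hypRho1 (X : Fin n → Finset α) (T : Finset α) :
    excess (hypRho1 X) T = ∑ i, ((#(T ∩ X i) : ℤ) - min (#(T ∩ X i) : ℤ) 1) := by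
  have hsingle : ∀ t, hypRho1 X {t} = ∑ i, if t ∈ X i then 1 else 0 := fun t =>
    sum_congr rfl fun i _ => by by_cases h : t ∈ X i <;> simp [h]
  rw [excess, sum_congr rfl fun t _ => hsingle t, sum_comm, hypRho1, ← sum_sub_distrib]
  simp only [sum_boole, filter_mem_eq_inter]

lemma excess_hypRho1_eq_zero (h : ∀ i, #(T ∩ X i) ≤ 1) : excess (hypRho1 X) T = 0 := by
  rw [excess_hypRho1]
  exact sum_eq_zero fun i _ => by have := h i; omega

lemma excess_hypRho1_of_subset (hH2 : ∀ i j, i ≠ j → #(X i ∩ X j) ≤ 1) {p : Fin n}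
    (hTp : T ⊆ X p) (hT : T.Nonempty) : excess (hypRho1 X) T = #T - 1 := by
  rw [excess_hypRho1, sum_eq_single p]
  · rw [inter_eq_left.2 hTp]
    have := hT.card_pos
    omega
  · intro i _ hip
    have := (card_le_card (inter_subset_inter hTp subset_rfl)).trans (hH2 p i (Ne.symm hip))
    omega
  · simp

lemma card_pair_inter_le_one (h : ¬(a ∈ S ∧ b ∈ S)) : #({a, b} ∩ S) ≤ 1 := by
  rw [card_le_one]
  intro x hx y hy
  simp only [mem_inter, mem_insert, mem_singleton] at hx hy
  grind

def AgreesOnSmallSets (E : Finset α) (X : Fin n → Finset α) (σ : Finset α → ℤ) : Prop :=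
  ∀ A ⊆ E, (#A ≤ 2 ∨ (#A = 3 ∧ ∃ i, A ⊆ X i)) → σ A = hypRho1 X A

lemma AgreesOnSmallSets.excess_eq (hσ : AgreesOnSmallSets E X σ) (hT : T ⊆ E)
    (hcard : #T ≤ 2 ∨ (#T = 3 ∧ ∃ i, T ⊆ X i)) : excess σ T = excess (hypRho1 X) T :=
  excess_congr (fun t ht => hσ {t} (singleton_subset_iff.2 (hT ht)) (Or.inl (by simp)))
    (hσ T hT hcard)

lemma AgreesOnSmallSets.excess_pair_of_mem (hσ : AgreesOnSmallSets E X σ)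
    (hXsub : ∀ i, X i ⊆ E) (hH2 : ∀ i j, i ≠ j → #(X i ∩ X j) ≤ 1) {p : Fin n} (ha : a ∈ X p)
    (hb : b ∈ X p) (hab : a ≠ b) : excess σ {a, b} = 1 := by
  rw [hσ.excess_eq (pair_subset_of_mem (hXsub p ha) (hXsub p hb)) (Or.inl card_le_two),
    excess_hypRho1_of_subset hH2 (pair_subset_of_mem ha hb) (insert_nonempty _ _), card_pair hab]
  rfl

lemma AgreesOnSmallSets.excess_triple_of_mem (hσ : AgreesOnSmallSets E X σ)
    (hXsub : ∀ i, X i ⊆ E) (hH2 : ∀ i j, i ≠ j → #(X i ∩ X j) ≤ 1) {p : Fin n} (ha : a ∈ X p)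
    (hb : b ∈ X p) (hc : c ∈ X p) (hab : a ≠ b) (hac : a ≠ c) (hbc : b ≠ c) :
    excess σ {a, b, c} = 2 := by
  have hsub : ({a, b, c} : Finset α) ⊆ X p := by simp [insert_subset_iff, ha, hb, hc]
  have hcard : #({a, b, c} : Finset α) = 3 := card_eq_three.2 ⟨a, b, c, hab, hac, hbc, rfl⟩
  rw [hσ.excess_eq (hsub.trans (hXsub p)) (Or.inr ⟨hcard, p, hsub⟩),
    excess_hypRho1_of_subset hH2 hsub (insert_nonempty _ _), hcard]
  rfl

lemma AgreesOnSmallSets.excess_pair_of_separated (hσ : AgreesOnSmallSets E X σ) (ha : a ∈ E)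
    (hb : b ∈ E) (hsep : ∀ i, ¬(a ∈ X i ∧ b ∈ X i)) : excess σ {a, b} = 0 := by
  rw [hσ.excess_eq (pair_subset_of_mem ha hb) (Or.inl card_le_two)]
  exact excess_hypRho1_eq_zero fun i => card_pair_inter_le_one (hsep i)

lemma exists_pair_mem_block (hcomplete : ∀ p q : Fin n, p ≠ q → (X p ∩ X q).Nonempty)
    (hsep : ∀ p q : Fin n, p ≠ q → ∃ a ∈ X p, ∃ b ∈ X q, ∀ i : Fin n, ¬(a ∈ X i ∧ b ∈ X i))
    {p q : Fin n} (hpq : p ≠ q) : ∃ a ∈ X p, ∃ c ∈ X p, a ≠ c := by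
  obtain ⟨c, hc⟩ := hcomplete p q hpq
  obtain ⟨a, ha, b, hb, hab⟩ := hsep p q hpq
  exact ⟨a, ha, c, (mem_inter.1 hc).1, by rintro rfl; exact hab q ⟨(mem_inter.1 hc).2, hb⟩⟩

/-- Two blocks share an element `c` but contain a separated pair `a ∈ X p`, `b ∈ X q`; were both
blocks parallel classes of the same summand, `a` and `b` would be parallel through `c`. -/
lemma injective_of_excess_pair_eq_one (hM : ∀ j, IsMatroidRankOn E (M j))
    (hsum : ∀ X ⊆ E, σ X = ∑ j, M j X) (hXsub : ∀ i, X i ⊆ E) (hσ : AgreesOnSmallSets E X σ)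
    (hcomplete : ∀ p q : Fin n, p ≠ q → (X p ∩ X q).Nonempty)
    (hsep : ∀ p q : Fin n, p ≠ q → ∃ a ∈ X p, ∃ b ∈ X q, ∀ i : Fin n, ¬(a ∈ X i ∧ b ∈ X i))
    {φ : Fin n → Fin k} (hφ : ∀ p, ∀ x ∈ X p, ∀ y ∈ X p, x ≠ y → excess (M (φ p)) {x, y} = 1) :
    Injective φ := by
  intro p q hpq
  by_contra hne
  obtain ⟨c, hc⟩ := hcomplete p q hne
  rw [mem_inter] at hc
  obtain ⟨a, ha, b, hb, hab⟩ := hsep p q hne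
  have hac : a ≠ c := by rintro rfl; exact hab q ⟨hc.2, hb⟩
  have hbc : b ≠ c := by rintro rfl; exact hab p ⟨ha, hc.1⟩
  have hab' : a ≠ b := by rintro rfl; exact hab p ⟨ha, ha⟩
  have hparallel := (hM (φ p)).excess_pair_eq_one_trans (hXsub p ha) (hXsub q hb)
    (hXsub p hc.1) hab' hac hbc (hφ p a ha c hc.1 hac) (hpq ▸ hφ q b hb c hc.2 hbc)
  have hindep := excess_pair_eq_zero (fun j => (hM j).1) hsum (hXsub p ha) (hXsub q hb) hab'
    (hσ.excess_pair_of_separated (hXsub p ha) (hXsub q hb) hab) (φ p)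
  omega

end Hypergraph

theorem stmt7_general [DecidableEq α] {n : ℕ} (E : Finset α)
    (X : Fin n → Finset α)
    (hXsub : ∀ i, X i ⊆ E) (hXne : ∀ i, (X i).Nonempty)
    (hH2 : ∀ i j, i ≠ j → (X i ∩ X j).card ≤ 1)
    (hcomplete : ∀ p q : Fin n, p ≠ q → (X p ∩ X q).Nonempty)
    (hsep : ∀ p q : Fin n, p ≠ q →
      ∃ a ∈ X p, ∃ b ∈ X q, ∀ i : Fin n, ¬ (a ∈ X i ∧ b ∈ X i))
    (σ : Finset α → ℤ) (hσ : IsPolymatroidOn E σ)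
    (hagree : ∀ A ⊆ E,
      (A.card ≤ 2 ∨ (A.card = 3 ∧ ∃ i, A ⊆ X i)) →
      σ A = hypRho1 X A)
    (hσE : σ E < (n : ℤ)) :
    ∀ k : ℕ, 0 < k → ¬ KDecomposable k E σ := by
  rintro k - ⟨M, hM, hsum⟩
  suffices (n : ℤ) ≤ σ E by omega
  obtain hn | hn := Nat.lt_or_ge n 2
  · interval_cases n
    · simpa using hσ.nonneg subset_rfl
    · obtain ⟨a, ha⟩ := hXne 0
      have haE : {a} ⊆ E := singleton_subset_iff.2 (hXsub 0 ha)
      calc ((1 : ℕ) : ℤ) = σ {a} := by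
            rw [hagree {a} haE (Or.inl (by simp))]
            simp [hypRho1, ha]
        _ ≤ σ E := hσ.2.1 _ _ haE subset_rfl
  have : Nontrivial (Fin n) := Fin.nontrivial_iff_two_le.2 hn
  have hblock (p : Fin n) : ∃ a ∈ X p, ∃ b ∈ X p, a ≠ b := by
    obtain ⟨q, hqp⟩ := exists_ne p
    exact exists_pair_mem_block hcomplete hsep hqp.symm
  have hparallel (p : Fin n) : ∃ j, ∀ x ∈ X p, ∀ y ∈ X p, x ≠ y → excess (M j) {x, y} = 1 := by
    obtain ⟨a, ha, b, hb, hab⟩ := hblock p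
    exact exists_excess_pair_eq_one_on hM hsum (hXsub p) ha hb hab
      (fun x hx y hy => AgreesOnSmallSets.excess_pair_of_mem hagree hXsub hH2 hx hy)
      (fun x hx y hy z hz => AgreesOnSmallSets.excess_triple_of_mem hagree hXsub hH2 hx hy hz)
  choose φ hφ using hparallel
  have hφ_nonloop (p : Fin n) : 1 ≤ M (φ p) E := by
    obtain ⟨a, ha, b, hb, hab⟩ := hblock p
    exact (hM (φ p)).one_le_of_excess_pair_eq_one (hXsub p ha) (hXsub p hb) hab
      (hφ p a ha b hb hab)
  have hcount := natCast_card_le_sum_of_injective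
    (injective_of_excess_pair_eq_one hM hsum hXsub hagree hcomplete hsep hφ)
    (fun j => (hM j).1.nonneg subset_rfl) hφ_nonloop
  rwa [Fintype.card_fin, ← hsum E subset_rfl] at hcount

theorem stmt7 [DecidableEq α] {n : ℕ} (E : Finset α)
    (X : Fin n → Finset α)
    (hXsub : ∀ i, X i ⊆ E) (hXne : ∀ i, (X i).Nonempty)
    (hXinj : Function.Injective X)
    (hH2 : ∀ i j, i ≠ j → (X i ∩ X j).card ≤ 1)
    (hcomplete : ∀ p q : Fin n, p ≠ q → (X p ∩ X q).Nonempty)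
    (hsep : ∀ p q : Fin n, p ≠ q →
      ∃ a ∈ X p, ∃ b ∈ X q, ∀ i : Fin n, ¬ (a ∈ X i ∧ b ∈ X i))
    (σ : Finset α → ℤ) (hσ : IsPolymatroidOn E σ)
    (hagree : ∀ A ⊆ E,
      (A.card ≤ 2 ∨ (A.card = 3 ∧ ∃ i, A ⊆ X i)) →
      σ A = hypRho1 X A)
    (hσE : σ E < (n : ℤ)) :
    ∀ k : ℕ, 0 < k → ¬ KDecomposable k E σ :=
  stmt7_general E X hXsub hXne hH2 hcomplete hsep σ hσ hagree hσE
end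

section
/- Let ρ be an i-polymatroid on a finite set E with i-dual ρ*, and let k be an integer with k ≥ i. Then ρ is k-decomposable if and only if ρ* is k-decomposable. Consequently, if neither ρ nor ρ* is k′-decomposable for any positive integer k′ < i, then the least k for which ρ is k-decomposable equals the least k for which ρ* is k-decomposable (with both being nonexistent simultaneously if either is). -/
variable {α : Type*}

/-- The `i`-dual of an `i`-polymatroid on `E`. -/
def IDual [DecidableEq α] (i : ℕ) (E : Finset α) (ρ : Finset α → ℤ) :
    Finset α → ℤ :=
  fun X => (i : ℤ) * X.card - ρ E + ρ (E \ X)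

/-!
If `ρ = r_{M_1} + ⋯ + r_{M_k}` with `k ≥ i`, then, since `ρ {e} ≤ i`, every element is a loop of
at least `k - i` of the `M_j`. Assign to each element exactly `k - i` such indices and let `C_j` be
the set of elements assigned to `j`. Loops of `M_j` are coloops of its dual `M_j*`, so
`r_{M_j*}(X \ C_j) = r_{M_j*}(X) - |X ∩ C_j|`, and these matroid ranks sum to
`k|X| - ρ(E) + ρ(E \ X) - (k - i)|X| = ρ*(X)`. The converse is the same statement for `ρ*`,
as `i`-duality is an involution. Below `i` the two notions of decomposability agree by hypothesis,
so both sets of decomposition orders coincide and have the same least element.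
-/

open Finset

section Counting

variable {ι : Type*}

lemma card_sub_le_card_filter_eq_zero {s : Finset ι} {f : ι → ℤ} (hf : ∀ j ∈ s, 0 ≤ f j)
    {n : ℕ} (hsum : ∑ j ∈ s, f j ≤ n) : #s - n ≤ #{j ∈ s | f j = 0} := by
  have hsupp : (#{j ∈ s | ¬f j = 0} : ℤ) ≤ n :=
    calc (#{j ∈ s | ¬f j = 0} : ℤ) = ∑ j ∈ s with ¬f j = 0, 1 := by simp
      _ ≤ ∑ j ∈ s with ¬f j = 0, f j :=
        sum_le_sum fun j hj => by
          obtain ⟨hjs, hfj⟩ := mem_filter.1 hj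
          have := hf j hjs
          omega
      _ ≤ ∑ j ∈ s, f j := sum_le_sum_of_subset_of_nonneg (filter_subset _ _) fun j hj _ => hf j hj
      _ ≤ n := hsum
  have := card_filter_add_card_filter_not (s := s) (fun j => f j = 0)
  omega

lemma sum_card_filter_mem_eq_sum_card [Fintype ι] [DecidableEq ι] (S : α → Finset ι)
    (X : Finset α) :
    ∑ j, #{e ∈ X | j ∈ S e} = ∑ e ∈ X, #(S e) := by
  simp_rw [card_eq_sum_ones, sum_filter]
  rw [sum_comm]
  simp

end Counting

section

variable [DecidableEq α] {E : Finset α} {ρ : Finset α → ℤ} {i k : ℕ}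

namespace IsPolymatroidOn

lemma nonneg_s12 (h : IsPolymatroidOn E ρ) {X : Finset α} (hX : X ⊆ E) : 0 ≤ ρ X :=
  h.1 ▸ h.2.1 ∅ X (empty_subset X) hX

lemma union_le_add_sum_singleton (h : IsPolymatroidOn E ρ) {Y Z : Finset α} (hY : Y ⊆ E)
    (hZ : Z ⊆ E) : ρ (Y ∪ Z) ≤ ρ Y + ∑ e ∈ Z, ρ {e} := by
  induction Z using Finset.induction_on with
  | empty => simp
  | insert a Z ha ih =>
    rw [insert_subset_iff] at hZ
    have hYZ : Y ∪ Z ⊆ E := union_subset hY hZ.2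
    have hsubmod := h.2.2 (Y ∪ Z) {a} hYZ (singleton_subset_iff.2 hZ.1)
    have hinter := h.nonneg_s12 (inter_subset_left.trans hYZ : (Y ∪ Z) ∩ {a} ⊆ E)
    rw [union_insert, insert_eq, union_comm {a}, sum_insert ha]
    linarith [ih hZ.2]

lemma union_eq_of_singleton_eq_zero (h : IsPolymatroidOn E ρ) {Y L : Finset α} (hY : Y ⊆ E)
    (hL : L ⊆ E) (hloop : ∀ e ∈ L, ρ {e} = 0) : ρ (Y ∪ L) = ρ Y := by
  have hle := h.union_le_add_sum_singleton hY hL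
  rw [sum_eq_zero hloop, add_zero] at hle
  exact hle.antisymm (h.2.1 Y (Y ∪ L) subset_union_left (union_subset hY hL))

lemma iDual_singleton_le (h : IsPolymatroidOn E ρ) (e : α) :
    IDual i E ρ {e} ≤ i := by
  have := h.2.1 (E \ {e}) E sdiff_subset subset_rfl
  simp only [IDual, card_singleton, Nat.cast_one, mul_one]
  linarith

lemma iDual (h : IsPolymatroidOn E ρ) (hpi : ∀ e ∈ E, ρ {e} ≤ i) :
    IsPolymatroidOn E (IDual i E ρ) := by
  refine ⟨by simp [IDual], fun A B hAB hBE => ?_, fun A B hA hB => ?_⟩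
  · have hcompl : E \ A = (E \ B) ∪ (B \ A) := by
      rw [sdiff_union_sdiff_cancel hBE hAB]
    have hunion : ρ (E \ A) ≤ ρ (E \ B) + ∑ e ∈ B \ A, ρ {e} :=
      hcompl ▸ h.union_le_add_sum_singleton sdiff_subset (sdiff_subset.trans hBE)
    have hsingle : ∑ e ∈ B \ A, ρ {e} ≤ ∑ e ∈ B \ A, (i : ℤ) :=
      sum_le_sum fun e he => hpi e (hBE (mem_sdiff.1 he).1)
    have hcard : (#(B \ A) : ℤ) + #A = #B := by exact_mod_cast card_sdiff_add_card_eq_card hAB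
    simp only [sum_const, nsmul_eq_mul] at hsingle
    simp only [IDual]
    nlinarith
  · have hsubmod := h.2.2 (E \ A) (E \ B) sdiff_subset sdiff_subset
    have hcard : (#(A ∪ B) : ℤ) + #(A ∩ B) = #A + #B := by
      exact_mod_cast card_union_add_card_inter A B
    simp only [IDual, sdiff_union_distrib, sdiff_inter_distrib_right]
    linear_combination hsubmod + (i : ℤ) * hcard

lemma iDual_iDual (h : IsPolymatroidOn E ρ) {X : Finset α} (hX : X ⊆ E) :
    IDual i E (IDual i E ρ) X = ρ X := by
  have hcard : (#(E \ X) : ℤ) + #X = #E := by exact_mod_cast card_sdiff_add_card_eq_card hX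
  simp only [IDual, Finset.sdiff_self, Finset.sdiff_sdiff_eq_self hX, h.1]
  linear_combination (i : ℤ) * hcard

lemma comp_sdiff (h : IsPolymatroidOn E ρ) (C : Finset α) :
    IsPolymatroidOn E (fun X => ρ (X \ C)) := by
  refine ⟨by simpa using h.1, fun A B hAB hBE => ?_, fun A B hA hB => ?_⟩
  · exact h.2.1 _ _ (sdiff_subset_sdiff hAB subset_rfl) (sdiff_subset.trans hBE)
  · have hinter : (A ∩ B) \ C = (A \ C) ∩ (B \ C) := inf_sdiff
    simp only [union_sdiff_distrib, hinter]
    exact h.2.2 _ _ (sdiff_subset.trans hA) (sdiff_subset.trans hB)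

/-- Loops of `ρ` are coloops of its `i`-dual. -/
lemma iDual_eq_iDual_sdiff_add (h : IsPolymatroidOn E ρ) {C X : Finset α} (hC : C ⊆ E)
    (hloop : ∀ e ∈ C, ρ {e} = 0) (hX : X ⊆ E) :
    IDual i E ρ X = IDual i E ρ (X \ C) + i * #(X ∩ C) := by
  have hcompl : E \ (X \ C) = (E \ X) ∪ (X ∩ C) := by
    ext x
    simp only [mem_sdiff, mem_union, mem_inter]
    constructor
    · rintro ⟨hxE, hxXC⟩
      by_cases hxX : x ∈ X <;> tauto
    · rintro (⟨hxE, hxX⟩ | ⟨hxX, hxC⟩)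
      · exact ⟨hxE, fun hx => hxX hx.1⟩
      · exact ⟨hX hxX, fun hx => hx.2 hxC⟩
  have hloops : ρ (E \ (X \ C)) = ρ (E \ X) := by
    rw [hcompl]
    exact h.union_eq_of_singleton_eq_zero sdiff_subset (inter_subset_right.trans hC)
      fun e he => hloop e (mem_inter.1 he).2
  have hcard : (#(X \ C) : ℤ) + #(X ∩ C) = #X := by exact_mod_cast card_sdiff_add_card_inter X C
  simp only [IDual, hloops]
  linear_combination (i : ℤ) * hcard.symm

end IsPolymatroidOn

namespace IsMatroidRankOn

lemma iDual_one {r : Finset α → ℤ} (h : IsMatroidRankOn E r) : IsMatroidRankOn E (IDual 1 E r) :=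
  ⟨h.1.iDual (by exact_mod_cast h.2), fun e _ => by exact_mod_cast h.1.iDual_singleton_le e⟩

lemma comp_sdiff {r : Finset α → ℤ} (h : IsMatroidRankOn E r) (C : Finset α) :
    IsMatroidRankOn E (fun X => r (X \ C)) :=
  ⟨h.1.comp_sdiff C, fun e he =>
    (h.1.2.1 _ _ sdiff_subset (singleton_subset_iff.2 he)).trans (h.2 e he)⟩

end IsMatroidRankOn

lemma iDual_eq_sum_iDual_one {M : Fin k → Finset α → ℤ} (hsum : ∀ X ⊆ E, ρ X = ∑ j, M j X)
    (X : Finset α) : IDual k E ρ X = ∑ j, IDual 1 E (M j) X := by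
  simp only [IDual, hsum E subset_rfl, hsum (E \ X) sdiff_subset, sum_add_distrib,
    sum_sub_distrib, Nat.cast_one, one_mul, sum_const, card_univ, Fintype.card_fin, nsmul_eq_mul]

theorem KDecomposable.iDual (hik : i ≤ k) (hpi : ∀ e ∈ E, ρ {e} ≤ i)
    (hdec : KDecomposable k E ρ) : KDecomposable k E (IDual i E ρ) := by
  obtain ⟨M, hM, hsum⟩ := hdec
  have hloops (e : α) (he : e ∈ E) : k - i ≤ #{j | M j {e} = 0} := by
    have hsingle : {e} ⊆ E := singleton_subset_iff.2 he
    simpa using card_sub_le_card_filter_eq_zero (s := univ)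
      (fun j _ => (hM j).1.nonneg_s12 hsingle) ((hsum {e} hsingle).symm.trans_le (hpi e he))
  choose! S hS using fun e he => exists_subset_card_eq (hloops e he)
  set C : Fin k → Finset α := fun j => {e ∈ E | j ∈ S e}
  refine ⟨fun j X => IDual 1 E (M j) (X \ C j), fun j => (hM j).iDual_one.comp_sdiff (C j),
    fun X hX => ?_⟩
  have hcoloops (j : Fin k) : IDual 1 E (M j) X = IDual 1 E (M j) (X \ C j) + #(X ∩ C j) := by
    simpa using (hM j).1.iDual_eq_iDual_sdiff_add (i := 1) (filter_subset _ E)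
      (fun e he => by
        obtain ⟨heE, hjS⟩ := mem_filter.1 he
        simpa using (hS e heE).1 hjS) hX
  have hcount : ∑ j, (#(X ∩ C j) : ℤ) = (k - i : ℕ) * #X := by
    have hinter (j : Fin k) : X ∩ C j = {e ∈ X | j ∈ S e} := by
      rw [inter_filter, inter_eq_left.2 hX]
    simp_rw [hinter]
    rw [← Nat.cast_sum, sum_card_filter_mem_eq_sum_card,
      sum_congr rfl fun e he => (hS e (hX he)).2]
    simp [mul_comm]
  calc IDual i E ρ X = IDual k E ρ X - (k - i : ℕ) * #X := by
        simp only [IDual, Nat.cast_sub hik]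
        ring
    _ = ∑ j, IDual 1 E (M j) X - ∑ j, (#(X ∩ C j) : ℤ) := by
        rw [iDual_eq_sum_iDual_one hsum X, hcount]
    _ = ∑ j, IDual 1 E (M j) (X \ C j) := by
        rw [← sum_sub_distrib]
        simp [hcoloops]

theorem kDecomposable_iff_kDecomposable_iDual (hik : i ≤ k) (hρ : IsPolymatroidOn E ρ)
    (hpi : ∀ e ∈ E, ρ {e} ≤ i) : KDecomposable k E ρ ↔ KDecomposable k E (IDual i E ρ) := by
  refine ⟨KDecomposable.iDual hik hpi, fun hdual => ?_⟩
  obtain ⟨M, hM, hsum⟩ := hdual.iDual hik fun e _ => hρ.iDual_singleton_le e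
  exact ⟨M, hM, fun X hX => (hρ.iDual_iDual hX).symm.trans (hsum X hX)⟩

end

theorem stmt12_general [DecidableEq α] (E : Finset α) (i : ℕ)
    (ρ : Finset α → ℤ)
    (hρ : IsPolymatroidOn E ρ) (hpi : ∀ e ∈ E, ρ {e} ≤ (i : ℤ)) :
    (∀ k : ℕ, i ≤ k →
      (KDecomposable k E ρ ↔ KDecomposable k E (IDual i E ρ))) ∧
    ((∀ k' : ℕ, 0 < k' → k' < i →
        ¬ KDecomposable k' E ρ ∧ ¬ KDecomposable k' E (IDual i E ρ)) →
      ∀ m : ℕ,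
        IsLeast {k : ℕ | 0 < k ∧ KDecomposable k E ρ} m ↔
        IsLeast {k : ℕ | 0 < k ∧ KDecomposable k E (IDual i E ρ)} m) := by
  have hiff (k : ℕ) (hik : i ≤ k) := kDecomposable_iff_kDecomposable_iDual hik hρ hpi
  refine ⟨hiff, fun hsmall m => ?_⟩
  suffices hsets : {k : ℕ | 0 < k ∧ KDecomposable k E ρ} =
      {k : ℕ | 0 < k ∧ KDecomposable k E (IDual i E ρ)} by
    rw [hsets]
  ext k
  refine and_congr_right fun hk => ?_
  rcases le_or_gt i k with hik | hki
  · exact hiff k hik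
  · exact iff_of_false (hsmall k hk hki).1 (hsmall k hk hki).2

theorem stmt12 [DecidableEq α] (E : Finset α) (i : ℕ) (hi : 0 < i)
    (ρ : Finset α → ℤ)
    (hρ : IsPolymatroidOn E ρ) (hpi : ∀ e ∈ E, ρ {e} ≤ (i : ℤ)) :
    (∀ k : ℕ, i ≤ k →
      (KDecomposable k E ρ ↔ KDecomposable k E (IDual i E ρ))) ∧
    ((∀ k' : ℕ, 0 < k' → k' < i →
        ¬ KDecomposable k' E ρ ∧ ¬ KDecomposable k' E (IDual i E ρ)) →
      ∀ m : ℕ,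
        IsLeast {k : ℕ | 0 < k ∧ KDecomposable k E ρ} m ↔
        IsLeast {k : ℕ | 0 < k ∧ KDecomposable k E (IDual i E ρ)} m) :=
  stmt12_general E i ρ hρ hpi
end
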